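/- arXiv:1903.05832 — 10 statements merged into one kernel-verified Lean document; each statement's English description precedes it below -/
import Mathlib

section
/- Let G be a finite simple graph, k a natural number, F ⊆ V(G) a set of vertices with |F| ≥ k+1, and S ⊆ F. Then there exists a set W of unordered pairs of distinct vertices of F, disjoint from E(G), with |W| ≤ Σ_{x∈S} max(k − deg_G(x), 0), such that in the graph G ∪ W (obtained by adding the pairs of W as edges) every vertex x ∈ S has degree at least k. -/
/-- The degree of a vertex: the number of its neighbors. -/
noncomputable def deg {V : Type*} (G : SimpleGraph V) (v : V) : ℕ :=
  (G.neighborSet v).ncard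

lemma deg_mono {V : Type*} [Fintype V] {G G' : SimpleGraph V} (h : G ≤ G') (v : V) :
    deg G v ≤ deg G' v :=
  Set.ncard_le_ncard (fun _ hw => h hw) (Set.toFinite _)

lemma fromEdgeSet_union' {V : Type*} (s t : Set (Sym2 V)) :
    SimpleGraph.fromEdgeSet (s ∪ t) =
      SimpleGraph.fromEdgeSet s ⊔ SimpleGraph.fromEdgeSet t := by
  ext a b
  simp only [SimpleGraph.fromEdgeSet_adj, Set.mem_union, SimpleGraph.sup_adj]
  tauto

lemma key {V : Type*} [Fintype V] (k : ℕ) (F : Finset V) (hF : k + 1 ≤ F.card)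
    (S : Finset V) (hS : S ⊆ F) :
    ∀ n (G : SimpleGraph V), (∑ x ∈ S, (k - deg G x)) = n →
    ∃ W : Finset (Sym2 V),
      (∀ e ∈ W, ¬ e.IsDiag) ∧
      (∀ e ∈ W, ∀ v ∈ e, v ∈ F) ∧
      (∀ e ∈ W, e ∉ G.edgeSet) ∧
      W.card ≤ ∑ x ∈ S, (k - deg G x) ∧
      (∀ x ∈ S,
        k ≤ deg (G ⊔ SimpleGraph.fromEdgeSet (↑W : Set (Sym2 V))) x) := by
  intro n
  induction n using Nat.strong_induction_on with
  | _ n ih =>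
    intro G hn
    classical
    by_cases hall : ∀ x ∈ S, k ≤ deg G x
    · refine ⟨∅, by simp, by simp, by simp, by simp, ?_⟩
      intro x hx
      simpa using hall x hx
    · push_neg at hall
      obtain ⟨x, hxS, hxk⟩ := hall
      -- find y ∈ F, y ≠ x, y not a neighbor of x
      have hfin : (G.neighborSet x).Finite := Set.toFinite _
      set T : Finset V := insert x hfin.toFinset with hT
      have hTcard : T.card ≤ k := by
        calc T.card ≤ hfin.toFinset.card + 1 := Finset.card_insert_le _ _
        _ = deg G x + 1 := by rw [deg, Set.ncard_eq_toFinset_card _ hfin]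
        _ ≤ k := hxk
      have hlt : T.card < F.card := lt_of_le_of_lt hTcard (by omega)
      have hny : ∃ y ∈ F, y ∉ T := by
        by_contra hc
        push_neg at hc
        exact absurd (Finset.card_le_card hc) (by omega)
      obtain ⟨y, hyF, hyT⟩ := hny
      have hyx : y ≠ x := by intro h; exact hyT (by simp [hT, h])
      have hynadj : ¬ G.Adj x y := by
        intro h; exact hyT (by simp [hT, SimpleGraph.mem_neighborSet, h])
      set e : Sym2 V := s(x, y) with he
      set G' : SimpleGraph V := G ⊔ SimpleGraph.fromEdgeSet {e} with hG'
      have hGle : G ≤ G' := le_sup_left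
      have hN' : G'.neighborSet x = insert y (G.neighborSet x) := by
        ext z
        simp only [SimpleGraph.mem_neighborSet, hG', SimpleGraph.sup_adj,
          SimpleGraph.fromEdgeSet_adj, Set.mem_singleton_iff, he, Sym2.eq_iff,
          Set.mem_insert_iff]
        constructor
        · rintro (h | ⟨h1 | h1, hne⟩)
          · exact Or.inr h
          · exact Or.inl h1.2
          · exact absurd h1.1.symm hyx
        · rintro (rfl | h)
          · exact Or.inr ⟨by simp, Ne.symm hyx⟩
          · exact Or.inl h
      have hdegx : deg G' x = deg G x + 1 := by
        rw [deg, hN', Set.ncard_insert_of_notMem (by simpa using hynadj) (Set.toFinite _)]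
        rfl
      have hsumlt : (∑ z ∈ S, (k - deg G' z)) < ∑ z ∈ S, (k - deg G z) := by
        apply Finset.sum_lt_sum
        · intro z hz; exact Nat.sub_le_sub_left (deg_mono hGle z) k
        · exact ⟨x, hxS, by rw [hdegx]; omega⟩
      obtain ⟨W', h1, h2, h3, h4, h5⟩ :=
        ih _ (by omega) G' rfl
      refine ⟨insert e W', ?_, ?_, ?_, ?_, ?_⟩
      · intro f hf
        rcases Finset.mem_insert.mp hf with rfl | hf
        · simp [he, Ne.symm hyx]
        · exact h1 f hf
      · intro f hf v hv
        rcases Finset.mem_insert.mp hf with rfl | hf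
        · rw [he] at hv
          rcases Sym2.mem_iff.mp hv with rfl | rfl
          · exact hS hxS
          · exact hyF
        · exact h2 f hf v hv
      · intro f hf
        rcases Finset.mem_insert.mp hf with rfl | hf
        · simpa [he, SimpleGraph.mem_edgeSet] using hynadj
        · intro hc
          exact h3 f hf (SimpleGraph.edgeSet_mono hGle hc)
      · calc (insert e W').card ≤ W'.card + 1 := Finset.card_insert_le _ _
          _ ≤ (∑ z ∈ S, (k - deg G' z)) + 1 := by omega
          _ ≤ ∑ z ∈ S, (k - deg G z) := by omega
      · intro z hz
        have heq : G ⊔ SimpleGraph.fromEdgeSet (↑(insert e W') : Set (Sym2 V)) =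
            G' ⊔ SimpleGraph.fromEdgeSet (↑W' : Set (Sym2 V)) := by
          rw [hG', Finset.coe_insert, Set.insert_eq, fromEdgeSet_union', sup_assoc]
        rw [heq]
        exact h5 z hz

/-- Greedy guarantee: if `|F| ≥ k+1` and `S ⊆ F`, there is a set `W` of non-edges between
distinct vertices of `F`, with `|W| ≤ Σ_{x∈S} max(k − deg_G(x), 0)`, whose addition raises
the degree of every vertex of `S` to at least `k`. -/
theorem stmt_2 {V : Type*} [Fintype V] (G : SimpleGraph V) (k : ℕ)
    (F : Finset V) (hF : k + 1 ≤ F.card) (S : Finset V) (hS : S ⊆ F) :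
    ∃ W : Finset (Sym2 V),
      (∀ e ∈ W, ¬ e.IsDiag) ∧
      (∀ e ∈ W, ∀ v ∈ e, v ∈ F) ∧
      (∀ e ∈ W, e ∉ G.edgeSet) ∧
      W.card ≤ ∑ x ∈ S, (k - deg G x) ∧
      (∀ x ∈ S,
        k ≤ deg (G ⊔ SimpleGraph.fromEdgeSet (↑W : Set (Sym2 V))) x) := by
  exact key k F hF S hS _ G rfl
end

section
/- Let H be a finite simple graph, n, k ≥ 1 natural numbers, and Y a set of k vertices of H each of degree exactly n in H. Suppose the number of unordered pairs {u,v} ⊆ Y with u ≠ v and {u,v} ∉ E(H) is at most m. Then every set W of unordered pairs of distinct vertices of H, disjoint from E(H), such that every vertex of Y has degree at least n+k−1 in the graph H ∪ W, satisfies |W| ≥ k(k−1) − m. -/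
/-!
Double count the incidences between `Y` and the added pairs `W`. Each `y ∈ Y` gains at least
`k - 1` neighbours, so lies in at least `k - 1` pairs of `W`, giving at least `k(k - 1)`
incidences. A pair of `W` meets `Y` at most once unless it is a non-edge of `H` with two
distinct ends in `Y`, and there are at most `m` of those.
-/

open Finset

namespace SimpleGraph

variable {V : Type*}

lemma deg_sup_le (G G' : SimpleGraph V) (v : V) : deg (G ⊔ G') v ≤ deg G v + deg G' v := by
  unfold deg
  rw [neighborSet_sup]
  exact Set.ncard_union_le _ _

lemma deg_fromEdgeSet_le_card_filter_mem [DecidableEq V] (W : Finset (Sym2 V)) (v : V) :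
    deg (fromEdgeSet (W : Set (Sym2 V))) v ≤ #{e ∈ W | v ∈ e} := by
  rw [deg, ← Set.ncard_coe_finset]
  refine Set.ncard_le_ncard_of_injOn (fun w => s(v, w)) ?_ (fun a _ b _ h => Sym2.congr_right.mp h)
    (Set.toFinite _)
  intro w hw
  simp only [mem_neighborSet, fromEdgeSet_adj] at hw
  simpa using hw.1

end SimpleGraph

namespace Sym2

variable {V : Type*} [DecidableEq V]

lemma card_filter_mem_le (Y : Finset V) (e : Sym2 V) :
    #{y ∈ Y | y ∈ e} ≤ 1 + if e ∈ Y.sym2 ∧ ¬e.IsDiag then 1 else 0 := by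
  have hsub : {y ∈ Y | y ∈ e} ⊆ e.toFinset := fun y hy => by simpa using (mem_filter.mp hy).2
  have hle := card_le_card hsub
  have hcard := e.card_toFinset
  split_ifs at hcard ⊢ with hint hdiag hdiag <;> try omega
  obtain ⟨v, hve, hvY⟩ : ∃ v ∈ e, v ∉ Y := by simpa [mem_sym2_iff] using fun h => hint ⟨h, hdiag⟩
  have hss : {y ∈ Y | y ∈ e} ⊂ e.toFinset :=
    ssubset_of_subset_of_ne hsub fun h => hvY (mem_filter.mp (h ▸ mem_toFinset.mpr hve)).1
  have := card_lt_card hss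
  omega

lemma sum_card_filter_mem_le (Y : Finset V) (W : Finset (Sym2 V)) :
    ∑ e ∈ W, #{y ∈ Y | y ∈ e} ≤ #W + #{e ∈ W | e ∈ Y.sym2 ∧ ¬e.IsDiag} := by
  calc ∑ e ∈ W, #{y ∈ Y | y ∈ e}
      ≤ ∑ e ∈ W, (1 + if e ∈ Y.sym2 ∧ ¬e.IsDiag then 1 else 0) :=
        sum_le_sum fun e _ => card_filter_mem_le Y e
    _ = #W + #{e ∈ W | e ∈ Y.sym2 ∧ ¬e.IsDiag} := by
        rw [sum_add_distrib, card_filter, sum_const, smul_eq_mul, mul_one]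

end Sym2

lemma card_filter_mem_sym2_le_ncard_nonEdges {V : Type*} [DecidableEq V] (H : SimpleGraph V)
    (Y : Finset V) (W : Finset (Sym2 V)) (hnew : ∀ e ∈ W, e ∉ H.edgeSet) :
    #{e ∈ W | e ∈ Y.sym2 ∧ ¬e.IsDiag} ≤
      {e : Sym2 V | (∀ v ∈ e, v ∈ Y) ∧ ¬ e.IsDiag ∧ e ∉ H.edgeSet}.ncard := by
  rw [← Set.ncard_coe_finset]
  refine Set.ncard_le_ncard (fun e he => ?_) ((Y.sym2.finite_toSet).subset fun e he => ?_)
  · obtain ⟨heW, heY, hdiag⟩ := mem_filter.mp he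
    exact ⟨mem_sym2_iff.mp heY, hdiag, hnew e heW⟩
  · exact mem_sym2_iff.mpr he.1

theorem stmt_5_general {V : Type*} (H : SimpleGraph V) (n k m : ℕ)
    (Y : Finset V) (hYcard : Y.card = k) (hYdeg : ∀ y ∈ Y, deg H y = n)
    (hm : {e : Sym2 V | (∀ v ∈ e, v ∈ Y) ∧ ¬ e.IsDiag ∧ e ∉ H.edgeSet}.ncard ≤ m)
    (W : Finset (Sym2 V))
    (hnew : ∀ e ∈ W, e ∉ H.edgeSet)
    (hdeg : ∀ y ∈ Y,
      n + k - 1 ≤ deg (H ⊔ SimpleGraph.fromEdgeSet (↑W : Set (Sym2 V))) y) :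
    k * (k - 1) - m ≤ W.card := by
  classical
  have hinc : ∀ y ∈ Y, k - 1 ≤ #{e ∈ W | y ∈ e} := fun y hy => by
    have := (hdeg y hy).trans ((H.deg_sup_le _ y).trans
      (Nat.add_le_add_left (SimpleGraph.deg_fromEdgeSet_le_card_filter_mem W y) _))
    rw [hYdeg y hy] at this
    omega
  have hcount : k * (k - 1) ≤ ∑ e ∈ W, #{y ∈ Y | y ∈ e} :=
    calc k * (k - 1) = ∑ _y ∈ Y, (k - 1) := by rw [sum_const, smul_eq_mul, hYcard]
      _ ≤ ∑ y ∈ Y, #{e ∈ W | y ∈ e} := sum_le_sum hinc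
      _ = ∑ e ∈ W, #{y ∈ Y | y ∈ e} :=
        sum_card_bipartiteAbove_eq_sum_card_bipartiteBelow (fun y e => y ∈ e)
  have hpairs := (Sym2.sum_card_filter_mem_le Y W).trans
    (Nat.add_le_add_left (card_filter_mem_sym2_le_ncard_nonEdges H Y W hnew) _)
  omega

/-- Soundness lemma of the Densest-k-Subgraph reduction: if `Y` is a set of `k` vertices
of degree exactly `n`, with at most `m` non-edges inside `Y`, then any set `W` of added
non-edges raising the degree of every vertex of `Y` to at least `n+k−1` satisfies
`|W| ≥ k(k−1) − m`. -/
theorem stmt_5 {V : Type*} [Fintype V] (H : SimpleGraph V) (n k m : ℕ)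
    (hn : 1 ≤ n) (hk : 1 ≤ k)
    (Y : Finset V) (hYcard : Y.card = k) (hYdeg : ∀ y ∈ Y, deg H y = n)
    (hm : {e : Sym2 V | (∀ v ∈ e, v ∈ Y) ∧ ¬ e.IsDiag ∧ e ∉ H.edgeSet}.ncard ≤ m)
    (W : Finset (Sym2 V))
    (hdiag : ∀ e ∈ W, ¬ e.IsDiag)
    (hnew : ∀ e ∈ W, e ∉ H.edgeSet)
    (hdeg : ∀ y ∈ Y,
      n + k - 1 ≤ deg (H ⊔ SimpleGraph.fromEdgeSet (↑W : Set (Sym2 V))) y) :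
    k * (k - 1) - m ≤ W.card :=
  stmt_5_general H n k m Y hYcard hYdeg hm W hnew hdeg
end

section
/- Let G be a finite simple graph on n vertices and k ≥ 1 an integer, and let H(G,k) be the associated graph of the reduction. If G contains a clique K of size k, then the set W = { {a_u, a_v} : u, v ∈ K, u ≠ v } consists of k(k−1)/2 unordered pairs of distinct followers of H(G,k), none of which is an edge of H(G,k), and in the graph H(G,k) ∪ W every one of the k followers a_v (v ∈ K) has degree n+k−1, which equals the degree of every leader. -/
/-- The generating relation of the reduction graph `H(G,k)`: vertices are `a_v = Sum.inl v`,
`d_{v,ℓ} = Sum.inr (Sum.inl (v,ℓ))` and leaders `x_i = Sum.inr (Sum.inr i)`; `a_u ~ a_v`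
iff `{u,v}` is a non-edge of `G`, the leaders form a clique, and `a_v ~ d_{v,ℓ}` for
`ℓ ∈ [deg_G(v)+1]`. -/
def hRel {V : Type*} (G : SimpleGraph V) (n k : ℕ) :
    (V ⊕ (V × Fin n) ⊕ Fin (n + k)) → (V ⊕ (V × Fin n) ⊕ Fin (n + k)) → Prop
  | Sum.inl u, Sum.inl v => ¬ G.Adj u v
  | Sum.inl v, Sum.inr (Sum.inl (w, ℓ)) => v = w ∧ (ℓ : ℕ) < deg G v + 1
  | Sum.inr (Sum.inr _), Sum.inr (Sum.inr _) => True
  | _, _ => False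

/-- The reduction graph `H(G,k)`. -/
def Hgraph {V : Type*} (G : SimpleGraph V) (n k : ℕ) :
    SimpleGraph (V ⊕ (V × Fin n) ⊕ Fin (n + k)) :=
  SimpleGraph.fromRel (hRel G n k)

/-- Followers of `H(G,k)`: every vertex except the leaders `x_i`. -/
def isFollowerH {V : Type*} {n k : ℕ} : (V ⊕ (V × Fin n) ⊕ Fin (n + k)) → Prop
  | Sum.inr (Sum.inr _) => False
  | _ => True

/-!
Among the vertices `a_w`, `H(G,k)` is the complement of `G`, so `a_v` has `n - 1 - deg_G v`
neighbours `a_w` and `deg_G v + 1` pendant neighbours `d_{v,ℓ}`: `n` in total, whatever `v` is.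
For `v ∈ K`, the pairs in `W` add the `k - 1` neighbours `a_w`, `w ∈ K ∖ {v}`, which are new
because `w` is a `G`-neighbour of `v`. The leaders form a clique of size `n + k` untouched by `W`.
-/

section

open SimpleGraph

variable {V : Type*}

lemma deg_eq_degree (G : SimpleGraph V) (v : V) [Fintype (G.neighborSet v)] :
    deg G v = G.degree v :=
  Set.ncard_eq_toFinset_card' _

lemma deg_compl_add_deg [Fintype V] (G : SimpleGraph V) (v : V) :
    deg Gᶜ v + deg G v + 1 = Fintype.card V := by
  classical
  have := G.degree_lt_card_verts v
  rw [deg_eq_degree, deg_eq_degree, degree_compl]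
  omega

lemma ncard_compl_neighborSet_union [Fintype V] {G : SimpleGraph V} {K : Finset V}
    (hK : ∀ u ∈ K, ∀ v ∈ K, u ≠ v → G.Adj u v) {v : V} (hv : v ∈ K) :
    (Gᶜ.neighborSet v ∪ (↑K \ {v})).ncard = deg Gᶜ v + (K.card - 1) := by
  classical
  have hdisj : Disjoint (Gᶜ.neighborSet v) (↑K \ {v}) :=
    Set.disjoint_left.mpr fun w hw ⟨hwK, hwv⟩ =>
      ((compl_adj G v w).mp hw).2 (hK v hv w hwK (Ne.symm hwv))
  rw [Set.ncard_union_eq hdisj, ← Finset.coe_erase, Set.ncard_coe_finset,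
    Finset.card_erase_of_mem hv, deg]

lemma ncard_setOf_val_lt {n m : ℕ} (h : m ≤ n) : {ℓ : Fin n | (ℓ : ℕ) < m}.ncard = m := by
  rw [Set.ncard_eq_toFinset_card', Set.toFinset_ofPred, Fin.card_filter_val_lt, min_eq_right h]

/-- The set `W` of the theorem: the pairs `{a_u, a_v}`, `u ≠ v ∈ K`. -/
def cliquePairs (n k : ℕ) (K : Finset V) : Set (Sym2 (V ⊕ (V × Fin n) ⊕ Fin (n + k))) :=
  {e | ∃ u ∈ K, ∃ v ∈ K, u ≠ v ∧ e = s(Sum.inl u, Sum.inl v)}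

lemma cliquePairs_eq_image (n k : ℕ) (K : Finset V) [DecidableEq V] :
    cliquePairs n k K =
      Sym2.map Sum.inl '' ↑(K.offDiag.image Sym2.mk.uncurry) := by
  ext e
  simp only [cliquePairs, Finset.coe_image, Set.image_image, Set.mem_image, Finset.mem_coe,
    Finset.mem_offDiag, Set.mem_ofPred_eq, Prod.exists, Function.uncurry_apply_pair, Sym2.map_mk]
  constructor
  · rintro ⟨u, hu, v, hv, huv, rfl⟩
    exact ⟨u, v, ⟨hu, hv, huv⟩, rfl⟩
  · rintro ⟨u, v, ⟨hu, hv, huv⟩, rfl⟩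
    exact ⟨u, hu, v, hv, huv, rfl⟩

lemma ncard_cliquePairs (n k : ℕ) (K : Finset V) :
    (cliquePairs n k K).ncard = K.card.choose 2 := by
  classical
  rw [cliquePairs_eq_image, Set.ncard_image_of_injective _ (Sym2.map.injective Sum.inl_injective),
    Set.ncard_coe_finset, Sym2.card_image_offDiag]

@[simp] lemma fromEdgeSet_cliquePairs_adj_inl_inl {n k : ℕ} {K : Finset V} {u w : V} :
    (fromEdgeSet (cliquePairs n k K)).Adj (.inl u) (.inl w) ↔ u ∈ K ∧ w ∈ K ∧ u ≠ w := by
  simp only [fromEdgeSet_adj, cliquePairs, Set.mem_ofPred_eq, Sym2.eq_iff, Sum.inl.injEq]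
  constructor
  · rintro ⟨⟨a, ha, b, hb, -, ⟨rfl, rfl⟩ | ⟨rfl, rfl⟩⟩, huw⟩ <;> simp_all
  · rintro ⟨hu, hw, huw⟩
    exact ⟨⟨u, hu, w, hw, huw, .inl ⟨rfl, rfl⟩⟩, by simpa using huw⟩

section
variable (G : SimpleGraph V) (n k : ℕ)

@[simp] lemma Hgraph_adj_inl_inl {u w : V} :
    (Hgraph G n k).Adj (.inl u) (.inl w) ↔ Gᶜ.Adj u w := by
  simp [Hgraph, hRel, compl_adj, G.adj_comm w u]

lemma cliquePairs_notMem_edgeSet {K : Finset V} (hK : ∀ u ∈ K, ∀ v ∈ K, u ≠ v → G.Adj u v) :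
    ∀ e ∈ cliquePairs n k K, e ∉ (Hgraph G n k).edgeSet := by
  rintro e ⟨u, hu, v, hv, huv, rfl⟩
  simp [hK u hu v hv huv]

lemma neighborSet_sup_cliquePairs_leader (K : Finset V) (i : Fin (n + k)) :
    (Hgraph G n k ⊔ fromEdgeSet (cliquePairs n k K)).neighborSet (.inr (.inr i)) =
      (fun j => .inr (.inr j)) '' {i}ᶜ := by
  ext (u | ⟨w, ℓ⟩ | j) <;> simp [Hgraph, hRel, cliquePairs, eq_comm]

lemma neighborSet_sup_cliquePairs_inl {K : Finset V} {v : V} (hv : v ∈ K) :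
    (Hgraph G n k ⊔ fromEdgeSet (cliquePairs n k K)).neighborSet (.inl v) =
      .inl '' (Gᶜ.neighborSet v ∪ (↑K \ {v})) ∪
        (fun ℓ => .inr (.inl (v, ℓ))) '' {ℓ : Fin n | (ℓ : ℕ) < deg G v + 1} := by
  ext (u | ⟨w, ℓ⟩ | j)
  · simp only [mem_neighborSet, sup_adj, Hgraph_adj_inl_inl, fromEdgeSet_cliquePairs_adj_inl_inl]
    simp [hv, ne_comm]
  · simp [Hgraph, hRel, cliquePairs, and_comm]
  · simp [Hgraph, hRel, cliquePairs]

lemma deg_sup_cliquePairs_leader (K : Finset V) (i : Fin (n + k)) :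
    deg (Hgraph G n k ⊔ fromEdgeSet (cliquePairs n k K)) (.inr (.inr i)) = n + k - 1 := by
  rw [deg, neighborSet_sup_cliquePairs_leader,
    Set.ncard_image_of_injective _ (fun _ _ h => by simpa using h), Set.ncard_compl,
    Set.ncard_singleton, Nat.card_eq_fintype_card, Fintype.card_fin]

end

lemma deg_sup_cliquePairs_inl [Fintype V] (G : SimpleGraph V) (n k : ℕ) (hn : n = Fintype.card V) {K : Finset V}
    (hK : ∀ u ∈ K, ∀ v ∈ K, u ≠ v → G.Adj u v) {v : V} (hv : v ∈ K) :
    deg (Hgraph G n k ⊔ fromEdgeSet (cliquePairs n k K)) (.inl v) = n + K.card - 1 := by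
  have hcard := deg_compl_add_deg G v
  have hKpos : 0 < K.card := Finset.card_pos.mpr ⟨v, hv⟩
  have hdisj : Disjoint (Sum.inl '' (Gᶜ.neighborSet v ∪ (↑K \ {v})))
      ((fun ℓ => .inr (.inl (v, ℓ))) '' {ℓ : Fin n | (ℓ : ℕ) < deg G v + 1} :
        Set (V ⊕ (V × Fin n) ⊕ Fin (n + k))) := by
    simp [Set.disjoint_left]
  rw [deg, neighborSet_sup_cliquePairs_inl G n k hv, Set.ncard_union_eq hdisj,
    Set.ncard_image_of_injective _ Sum.inl_injective, ncard_compl_neighborSet_union hK hv,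
    Set.ncard_image_of_injective _ (fun _ _ h => by simpa using h),
    ncard_setOf_val_lt (by omega)]
  omega

end

theorem stmt_6_general {V : Type*} [Fintype V] (G : SimpleGraph V)
    (k : ℕ) (n : ℕ) (hn : n = Fintype.card V)
    (K : Finset V) (hKcard : K.card = k)
    (hclique : ∀ u ∈ K, ∀ v ∈ K, u ≠ v → G.Adj u v) :
    let W : Set (Sym2 (V ⊕ (V × Fin n) ⊕ Fin (n + k))) :=
      {e | ∃ u ∈ K, ∃ v ∈ K, u ≠ v ∧ e = s(Sum.inl u, Sum.inl v)}
    (∀ e ∈ W, ¬ e.IsDiag) ∧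
    (∀ e ∈ W, ∀ z ∈ e, isFollowerH z) ∧
    (∀ e ∈ W, e ∉ (Hgraph G n k).edgeSet) ∧
    W.ncard = k * (k - 1) / 2 ∧
    (∀ v ∈ K,
      deg (Hgraph G n k ⊔ SimpleGraph.fromEdgeSet W) (Sum.inl v) = n + k - 1) ∧
    (∀ i : Fin (n + k),
      deg (Hgraph G n k ⊔ SimpleGraph.fromEdgeSet W) (Sum.inr (Sum.inr i)) = n + k - 1) := by
  refine ⟨?_, ?_, cliquePairs_notMem_edgeSet G n k hclique, ?_, fun v hv => ?_,
    deg_sup_cliquePairs_leader G n k K⟩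
  · rintro e ⟨u, -, v, -, huv, rfl⟩
    simpa using huv
  · rintro e ⟨u, -, v, -, -, rfl⟩ z hz
    rcases Sym2.mem_iff.mp hz with rfl | rfl <;> trivial
  · exact (ncard_cliquePairs n k K).trans (by rw [hKcard, Nat.choose_two_right])
  · exact (deg_sup_cliquePairs_inl G n k hn hclique hv).trans (by rw [hKcard])

/-- Completeness of the Densest-k-Subgraph reduction: if `K` is a clique of size `k` in `G`,
then `W = {{a_u,a_v} : u,v ∈ K, u ≠ v}` is a set of `k(k−1)/2` non-edges between distinct
followers of `H(G,k)`, and after adding them each `a_v` (`v ∈ K`) has degree `n+k−1`,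
which equals the degree of every leader. -/
theorem stmt_6 {V : Type*} [Fintype V] [DecidableEq V] (G : SimpleGraph V)
    (k : ℕ) (hk : 1 ≤ k) (n : ℕ) (hn : n = Fintype.card V)
    (K : Finset V) (hKcard : K.card = k)
    (hclique : ∀ u ∈ K, ∀ v ∈ K, u ≠ v → G.Adj u v) :
    let W : Set (Sym2 (V ⊕ (V × Fin n) ⊕ Fin (n + k))) :=
      {e | ∃ u ∈ K, ∃ v ∈ K, u ≠ v ∧ e = s(Sum.inl u, Sum.inl v)}
    (∀ e ∈ W, ¬ e.IsDiag) ∧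
    (∀ e ∈ W, ∀ z ∈ e, isFollowerH z) ∧
    (∀ e ∈ W, e ∉ (Hgraph G n k).edgeSet) ∧
    W.ncard = k * (k - 1) / 2 ∧
    (∀ v ∈ K,
      deg (Hgraph G n k ⊔ SimpleGraph.fromEdgeSet W) (Sum.inl v) = n + k - 1) ∧
    (∀ i : Fin (n + k),
      deg (Hgraph G n k ⊔ SimpleGraph.fromEdgeSet W) (Sum.inr (Sum.inr i)) = n + k - 1) :=
  stmt_6_general G k n hn K hKcard hclique
end

section
/- Let n ≥ 3, m ≥ 1, and S_1, …, S_m be subsets of U = {u_1, …, u_n}, and let G(U,S) be the associated set-cover graph. Then for every set W of unordered pairs of distinct followers, disjoint from E(G(U,S)), every leader Z_{j,q} (j ∈ [n], q ∈ {2,3,4,5}) has core number exactly 3 in the graph G(U,S) ∪ W. -/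
/-- The core number of a vertex `v`: the largest `k` such that `v` belongs to a subgraph
in which every vertex has degree at least `k` within that subgraph (equivalently, an
induced subgraph with minimum degree at least `k`). -/
noncomputable def coreNumber {V : Type*} (G : SimpleGraph V) (v : V) : ℕ :=
  sSup {k : ℕ | ∃ s : Set V, v ∈ s ∧ ∀ w ∈ s, k ≤ (s ∩ G.neighborSet w).ncard}

/-- Vertices of the set-cover reduction graph `G(U,S)` (0-based indices): `X i j` is
`X_{i+1,j+1}`, `W i q` is `W_{i+1,q+1}` and `Z j q` is `Z_{j+1,q+1}` of the paper. -/
inductive SCV (m n : ℕ) where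
  | X : Fin m → Fin n → SCV m n
  | W : Fin m → Fin 5 → SCV m n
  | Z : Fin n → Fin 5 → SCV m n

/-- Generating relation of `G(U,S)`, where `Su i` is the set `S_{i+1} ⊆ U` (a set of
indices `j`, `u_{j+1} ∈ S_{i+1}` iff `j ∈ Su i`): the path `X_{i,2},…,X_{i,n}` plus the
edge `{X_{i,n},X_{i,1}}`; `W_{i,1}` joined to `W_{i,2}` and `W_{i,5}`; a clique on
`{W_{i,2},…,W_{i,5}}`; `{W_{i,1},X_{i,j}}` iff `u_j ∉ S_i`; `Z_{j,1}` joined to `Z_{j,2}`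
and `Z_{j,5}`; a clique on `{Z_{j,2},…,Z_{j,5}}`; and `{X_{i,j},Z_{j,1}}` iff `u_j ∈ S_i`. -/
def scRel {m n : ℕ} (Su : Fin m → Finset (Fin n)) : SCV m n → SCV m n → Prop
  | .X i j, .X i' j' => i = i' ∧
      ((1 ≤ j.val ∧ j'.val = j.val + 1) ∨ (j.val = n - 1 ∧ j'.val = 0))
  | .W i q, .W i' q' => i = i' ∧
      ((q.val = 0 ∧ (q'.val = 1 ∨ q'.val = 4)) ∨ (1 ≤ q.val ∧ 1 ≤ q'.val))
  | .W i q, .X i' j => i = i' ∧ q.val = 0 ∧ j ∉ Su i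
  | .Z j q, .Z j' q' => j = j' ∧
      ((q.val = 0 ∧ (q'.val = 1 ∨ q'.val = 4)) ∨ (1 ≤ q.val ∧ 1 ≤ q'.val))
  | .X i j, .Z j' q => j = j' ∧ q.val = 0 ∧ j ∈ Su i
  | _, _ => False

/-- The set-cover reduction graph `G(U,S)`. -/
def scGraph {m n : ℕ} (Su : Fin m → Finset (Fin n)) : SimpleGraph (SCV m n) :=
  SimpleGraph.fromRel (scRel Su)

/-- Followers of `G(U,S)`: all vertices except the leaders `Z_{j,q}`, `q ∈ {2,3,4,5}`. -/
def scFollower {m n : ℕ} : SCV m n → Prop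
  | .Z _ q => q.val = 0
  | _ => True

lemma scv_Z_inj {m n : ℕ} (j : Fin n) :
    Function.Injective (fun q : Fin 5 => (SCV.Z j q : SCV m n)) := by
  intro a b h
  simpa using h

lemma adjZ {m n : ℕ} {Su : Fin m → Finset (Fin n)} {W : Set (Sym2 (SCV m n))}
    (hfol : ∀ e ∈ W, ∀ v ∈ e, scFollower v)
    {j : Fin n} {q : Fin 5} (hq : 1 ≤ q.val) {v : SCV m n}
    (h : (scGraph Su ⊔ SimpleGraph.fromEdgeSet W).Adj (SCV.Z j q) v) :
    ∃ q' : Fin 5, v = SCV.Z j q' ∧ q' ≠ q ∧ (1 ≤ q'.val ∨ q.val = 1 ∨ q.val = 4) := by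
  rcases h with h | h
  · rw [scGraph, SimpleGraph.fromRel_adj] at h
    obtain ⟨hne, h | h⟩ := h
    · cases v with
      | X i j' => exact absurd h (by simp [scRel])
      | W i q' => exact absurd h (by simp [scRel])
      | Z j' q' =>
        simp only [scRel] at h
        obtain ⟨hj, h⟩ := h
        subst hj
        refine ⟨q', rfl, fun he => hne (by rw [he]), ?_⟩
        rcases h with ⟨h0, _⟩ | ⟨_, h1⟩
        · omega
        · exact Or.inl h1
    · cases v with
      | X i j' =>
        simp only [scRel] at h
        omega
      | W i q' => exact absurd h (by simp [scRel])
      | Z j' q' =>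
        simp only [scRel] at h
        obtain ⟨hj, h⟩ := h
        subst hj
        refine ⟨q', rfl, fun he => hne (by rw [he]), ?_⟩
        rcases h with ⟨_, h1⟩ | ⟨h1, _⟩
        · exact Or.inr h1
        · exact Or.inl h1
  · rw [SimpleGraph.fromEdgeSet_adj] at h
    have := hfol _ h.1 (SCV.Z j q) (Sym2.mem_mk_left _ _)
    simp only [scFollower] at this
    omega

/-- For every set `W` of non-edges between distinct followers, every leader `Z_{j,q}`
(`q ∈ {2,3,4,5}`) has core number exactly 3 in `G(U,S) ∪ W`. -/
theorem stmt_8 {m n : ℕ} (hn : 3 ≤ n) (hm : 1 ≤ m) (Su : Fin m → Finset (Fin n))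
    (W : Set (Sym2 (SCV m n)))
    (hdiag : ∀ e ∈ W, ¬ e.IsDiag)
    (hfol : ∀ e ∈ W, ∀ v ∈ e, scFollower v)
    (hnew : ∀ e ∈ W, e ∉ (scGraph Su).edgeSet) :
    ∀ (j : Fin n) (q : Fin 5), 1 ≤ q.val →
      coreNumber (scGraph Su ⊔ SimpleGraph.fromEdgeSet W) (SCV.Z j q) = 3 := by
  intro j q hq
  set G := scGraph Su ⊔ SimpleGraph.fromEdgeSet W with hGdef
  have himg : ∀ (F : Finset (Fin 5)),
      ((fun a => (SCV.Z j a : SCV m n)) '' ↑F).ncard = F.card := by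
    intro F
    rw [Set.ncard_image_of_injective _ (scv_Z_inj j), Set.ncard_coe_finset]
  have hfin : ∀ (F : Finset (Fin 5)),
      ((fun a => (SCV.Z j a : SCV m n)) '' ↑F).Finite := fun F => F.finite_toSet.image _
  -- neighbor set bounds
  have hsub : ∀ (q : Fin 5), 1 ≤ q.val →
      G.neighborSet (SCV.Z j q) ⊆ (fun a => SCV.Z j a) '' ↑(Finset.univ.erase q) := by
    intro q hq v hv
    obtain ⟨q', rfl, hne, -⟩ := adjZ hfol hq hv
    exact ⟨q', by simp [Finset.mem_erase, hne], rfl⟩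
  have hsub3 : ∀ (q : Fin 5), q.val = 2 ∨ q.val = 3 →
      G.neighborSet (SCV.Z j q) ⊆
        (fun a => SCV.Z j a) '' ↑((Finset.univ.erase q).erase 0) := by
    intro q hq2 v hv
    obtain ⟨q', rfl, hne, h⟩ := adjZ hfol (by omega) hv
    have h1 : 1 ≤ q'.val := by rcases h with h | h | h <;> omega
    refine ⟨q', Finset.mem_coe.mpr (Finset.mem_erase.mpr
      ⟨?_, Finset.mem_erase.mpr ⟨hne, Finset.mem_univ _⟩⟩), rfl⟩
    intro h0
    rw [h0] at h1
    simp at h1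
  -- upper bound: every k in the set is ≤ 3
  have hub : ∀ k ∈ {k : ℕ | ∃ s : Set (SCV m n), SCV.Z j q ∈ s ∧
      ∀ w ∈ s, k ≤ (s ∩ G.neighborSet w).ncard}, k ≤ 3 := by
    rintro k ⟨s, hqs, hdeg⟩
    by_contra hk4
    push_neg at hk4
    have key : ∀ q2 : Fin 5, q2.val = 2 ∨ q2.val = 3 → SCV.Z j q2 ∈ s → False := by
      intro q2 h23 hmem
      have h1 := hdeg _ hmem
      have h0mem : (0 : Fin 5) ∈ Finset.univ.erase q2 :=
        Finset.mem_erase.mpr ⟨by intro h; rw [← h] at h23; simp at h23, Finset.mem_univ _⟩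
      have h2 : (s ∩ G.neighborSet (SCV.Z j q2)).ncard ≤ 3 := by
        calc (s ∩ G.neighborSet (SCV.Z j q2)).ncard
            ≤ ((fun a => (SCV.Z j a : SCV m n)) ''
                ↑((Finset.univ.erase q2).erase 0)).ncard :=
              Set.ncard_le_ncard (fun v hv => hsub3 q2 h23 hv.2) (hfin _)
          _ = ((Finset.univ.erase q2).erase 0).card := himg _
          _ ≤ 3 := by
              rw [Finset.card_erase_of_mem h0mem,
                Finset.card_erase_of_mem (Finset.mem_univ _)]
              simp
      omega
    have hqcases : q.val = 1 ∨ q.val = 2 ∨ q.val = 3 ∨ q.val = 4 := by omega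
    rcases hqcases with h1 | h2 | h3 | h4
    · -- q.val = 1
      have hmain := hdeg _ hqs
      have hTcard : ((fun a => (SCV.Z j a : SCV m n)) '' ↑(Finset.univ.erase q)).ncard = 4 := by
        rw [himg, Finset.card_erase_of_mem (Finset.mem_univ _)]
        simp
      have heq : s ∩ G.neighborSet (SCV.Z j q) =
          (fun a => (SCV.Z j a : SCV m n)) '' ↑(Finset.univ.erase q) :=
        Set.eq_of_subset_of_ncard_le (fun v hv => hsub q hq hv.2) (by omega) (hfin _)
      have h2T : (SCV.Z j (2 : Fin 5) : SCV m n) ∈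
          (fun a => (SCV.Z j a : SCV m n)) '' ↑(Finset.univ.erase q) :=
        ⟨2, by simp [Finset.mem_erase]; exact Fin.ne_of_val_ne (by omega), rfl⟩
      rw [← heq] at h2T
      exact key 2 (Or.inl rfl) h2T.1
    · exact key q (Or.inl h2) hqs
    · exact key q (Or.inr h3) hqs
    · have hmain := hdeg _ hqs
      have hTcard : ((fun a => (SCV.Z j a : SCV m n)) '' ↑(Finset.univ.erase q)).ncard = 4 := by
        rw [himg, Finset.card_erase_of_mem (Finset.mem_univ _)]
        simp
      have heq : s ∩ G.neighborSet (SCV.Z j q) =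
          (fun a => (SCV.Z j a : SCV m n)) '' ↑(Finset.univ.erase q) :=
        Set.eq_of_subset_of_ncard_le (fun v hv => hsub q hq hv.2) (by omega) (hfin _)
      have h2T : (SCV.Z j (2 : Fin 5) : SCV m n) ∈
          (fun a => (SCV.Z j a : SCV m n)) '' ↑(Finset.univ.erase q) :=
        ⟨2, by simp [Finset.mem_erase]; exact Fin.ne_of_val_ne (by omega), rfl⟩
      rw [← heq] at h2T
      exact key 2 (Or.inl rfl) h2T.1
  -- 3 is in the set
  have h3mem : 3 ∈ {k : ℕ | ∃ s : Set (SCV m n), SCV.Z j q ∈ s ∧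
      ∀ w ∈ s, k ≤ (s ∩ G.neighborSet w).ncard} := by
    refine ⟨(fun a => (SCV.Z j a : SCV m n)) '' ↑({1,2,3,4} : Finset (Fin 5)), ?_, ?_⟩
    · refine ⟨q, ?_, rfl⟩
      have hq' : q ∈ ({1,2,3,4} : Finset (Fin 5)) := by
        have : ∀ a : Fin 5, 1 ≤ a.val → a ∈ ({1,2,3,4} : Finset (Fin 5)) := by decide
        exact this q hq
      exact Finset.mem_coe.mpr hq'
    · rintro w ⟨b, hb, rfl⟩
      have hb' : b ∈ ({1,2,3,4} : Finset (Fin 5)) := Finset.mem_coe.mp hb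
      have hb1 : 1 ≤ b.val := by
        have : ∀ a : Fin 5, a ∈ ({1,2,3,4} : Finset (Fin 5)) → 1 ≤ a.val := by decide
        exact this b hb'
      have hsubset : (fun a => (SCV.Z j a : SCV m n)) ''
          ↑(({1,2,3,4} : Finset (Fin 5)).erase b) ⊆
          ((fun a => (SCV.Z j a : SCV m n)) '' ↑({1,2,3,4} : Finset (Fin 5))) ∩
            G.neighborSet (SCV.Z j b) := by
        rintro v ⟨a, ha, rfl⟩
        obtain ⟨hab, ha4⟩ := Finset.mem_erase.mp (Finset.mem_coe.mp ha)
        have ha1 : 1 ≤ a.val := by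
          have : ∀ x : Fin 5, x ∈ ({1,2,3,4} : Finset (Fin 5)) → 1 ≤ x.val := by decide
          exact this a ha4
        refine ⟨⟨a, Finset.mem_coe.mpr ha4, rfl⟩, ?_⟩
        show G.Adj (SCV.Z j b) (SCV.Z j a)
        rw [hGdef, SimpleGraph.sup_adj]
        left
        rw [scGraph, SimpleGraph.fromRel_adj]
        refine ⟨?_, Or.inl ⟨rfl, Or.inr ⟨hb1, ha1⟩⟩⟩
        intro hcontra
        injection hcontra with _ h2
        exact hab h2.symm
      calc (3 : ℕ) = (({1,2,3,4} : Finset (Fin 5)).erase b).card := by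
            rw [Finset.card_erase_of_mem hb']
            decide
        _ = ((fun a => (SCV.Z j a : SCV m n)) ''
              ↑(({1,2,3,4} : Finset (Fin 5)).erase b)).ncard := (himg _).symm
        _ ≤ _ := Set.ncard_le_ncard hsubset ((hfin _).inter_of_left _)
  rw [coreNumber]
  exact le_antisymm (csSup_le ⟨3, h3mem⟩ hub) (le_csSup ⟨3, hub⟩ h3mem)
end

section
/- Let n ≥ 3, m ≥ 1, and S_1, …, S_m be subsets of U = {u_1, …, u_n}, let G(U,S) be the associated set-cover graph, and fix i ∈ [m]. In the graph obtained from G(U,S) by adding the single edge {X_{i,1}, X_{i,2}}, every vertex X_{i,ℓ} (ℓ ∈ [n]) has core number at least 3, every vertex Z_{j,1} with u_j ∈ S_i has core number at least 3, and if moreover S_i ≠ U then the vertex W_{i,1} also has core number at least 3. -/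
/- ### Auxiliary material -/

instance {m n : ℕ} : Finite (SCV m n) := by
  have hinj : Function.Injective (fun v : SCV m n => match v with
    | .X i j => Sum.inl (i, j)
    | .W i q => Sum.inr (Sum.inl (i, q))
    | .Z j q => Sum.inr (Sum.inr (j, q))) := by
    intro a b h
    cases a <;> cases b <;> simp_all
  exact Finite.of_injective _ hinj

lemma three_le {V : Type*} [Finite V] {s : Set V} {a b c : V}
    (hab : a ≠ b) (hac : a ≠ c) (hbc : b ≠ c)
    (ha : a ∈ s) (hb : b ∈ s) (hc : c ∈ s) : 3 ≤ s.ncard := by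
  have h1 : ({a, b, c} : Set V) ⊆ s := by
    intro x hx
    simp only [Set.mem_insert_iff, Set.mem_singleton_iff] at hx
    rcases hx with rfl | rfl | rfl <;> assumption
  have h2 : ({a, b, c} : Set V).ncard = 3 := by
    rw [Set.ncard_insert_of_notMem (by simp [hab, hac]),
        Set.ncard_insert_of_notMem (by simp [hbc]), Set.ncard_singleton]
  calc (3 : ℕ) = ({a, b, c} : Set V).ncard := h2.symm
    _ ≤ s.ncard := Set.ncard_le_ncard h1 (Set.toFinite s)

/-- The candidate 3-core: the `i`-th `X`-cycle, the `i`-th `W`-gadget (without `W_{i,1}`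
when `S_i = U`), all `Z`-cliques and the `Z_{j,1}` for `j ∈ S_i`. -/
def gadgetSet {m n : ℕ} (Su : Fin m → Finset (Fin n)) (i : Fin m) : Set (SCV m n) :=
  fun v => match v with
  | .X i' _ => i' = i
  | .W i' q => i' = i ∧ (1 ≤ q.val ∨ Su i ≠ Finset.univ)
  | .Z j q => 1 ≤ q.val ∨ j ∈ Su i

lemma X_ne {m n : ℕ} {i : Fin m} {a b : Fin n} (h : a.val ≠ b.val) :
    SCV.X i a ≠ SCV.X i b := fun e => by cases e; exact h rfl

lemma W_ne {m n : ℕ} {i : Fin m} {a b : Fin 5} (h : a.val ≠ b.val) :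
    (SCV.W i a : SCV m n) ≠ SCV.W i b := fun e => by cases e; exact h rfl

lemma Z_ne {m n : ℕ} {j : Fin n} {a b : Fin 5} (h : a.val ≠ b.val) :
    (SCV.Z j a : SCV m n) ≠ SCV.Z j b := fun e => by cases e; exact h rfl

lemma scAdj {m n : ℕ} (Su : Fin m → Finset (Fin n)) {e : Set (Sym2 (SCV m n))}
    {a b : SCV m n} (hne : a ≠ b) (h : scRel Su a b ∨ scRel Su b a) :
    (scGraph Su ⊔ SimpleGraph.fromEdgeSet e).Adj a b :=
  Or.inl ⟨hne, h⟩

lemma gadget_key {m n : ℕ} (hn : 3 ≤ n) (Su : Fin m → Finset (Fin n)) (i : Fin m) :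
    ∀ w ∈ gadgetSet Su i, 3 ≤ ((gadgetSet Su i) ∩
      (scGraph Su ⊔ SimpleGraph.fromEdgeSet
        {s(SCV.X i (⟨0, by omega⟩ : Fin n),
           SCV.X i (⟨1, by omega⟩ : Fin n))}).neighborSet w).ncard := by
  set G' := scGraph Su ⊔ SimpleGraph.fromEdgeSet
      {s(SCV.X i (⟨0, by omega⟩ : Fin n), SCV.X i (⟨1, by omega⟩ : Fin n))} with hG'
  set s := gadgetSet Su i with hs
  -- the extra edge, both ways
  have hedge : G'.Adj (SCV.X i (⟨0, by omega⟩ : Fin n)) (SCV.X i (⟨1, by omega⟩ : Fin n)) := by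
    exact Or.inr ⟨rfl, X_ne (show (0 : ℕ) ≠ 1 by omega)⟩
  -- clique lemma for the gadget cliques
  have clique3 : ∀ (f : Fin 5 → SCV m n), Function.Injective f →
      (∀ q q' : Fin 5, 1 ≤ q.val → 1 ≤ q'.val → q ≠ q' → f q' ∈ s) →
      (∀ q q' : Fin 5, 1 ≤ q.val → 1 ≤ q'.val → q ≠ q' → G'.Adj (f q) (f q')) →
      ∀ q : Fin 5, 1 ≤ q.val → 3 ≤ (s ∩ G'.neighborSet (f q)).ncard := by
    intro f hf hmem hadj q h1
    have memInt : ∀ q' : Fin 5, 1 ≤ q'.val → q ≠ q' → f q' ∈ s ∩ G'.neighborSet (f q) :=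
      fun q' h1' hne => ⟨hmem q q' h1 h1' hne, hadj q q' h1 h1' hne⟩
    have hne : ∀ (a b : Fin 5), a.val ≠ b.val → f a ≠ f b := by
      intro a b hab h
      exact hab (congrArg Fin.val (hf h))
    rcases q with ⟨qv, hq5⟩
    have h1' : 1 ≤ qv := h1
    have hcase : qv = 1 ∨ qv = 2 ∨ qv = 3 ∨ qv = 4 := by omega
    rcases hcase with rfl | rfl | rfl | rfl
    · have hq : (⟨1, hq5⟩ : Fin 5) = 1 := rfl
      rw [hq] at memInt ⊢
      exact three_le (hne 2 3 (by decide)) (hne 2 4 (by decide)) (hne 3 4 (by decide))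
        (memInt 2 (by decide) (by decide)) (memInt 3 (by decide) (by decide))
        (memInt 4 (by decide) (by decide))
    · have hq : (⟨2, hq5⟩ : Fin 5) = 2 := rfl
      rw [hq] at memInt ⊢
      exact three_le (hne 1 3 (by decide)) (hne 1 4 (by decide)) (hne 3 4 (by decide))
        (memInt 1 (by decide) (by decide)) (memInt 3 (by decide) (by decide))
        (memInt 4 (by decide) (by decide))
    · have hq : (⟨3, hq5⟩ : Fin 5) = 3 := rfl
      rw [hq] at memInt ⊢
      exact three_le (hne 1 2 (by decide)) (hne 1 4 (by decide)) (hne 2 4 (by decide))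
        (memInt 1 (by decide) (by decide)) (memInt 2 (by decide) (by decide))
        (memInt 4 (by decide) (by decide))
    · have hq : (⟨4, hq5⟩ : Fin 5) = 4 := rfl
      rw [hq] at memInt ⊢
      exact three_le (hne 1 2 (by decide)) (hne 1 3 (by decide)) (hne 2 3 (by decide))
        (memInt 1 (by decide) (by decide)) (memInt 2 (by decide) (by decide))
        (memInt 3 (by decide) (by decide))
  intro w hw
  cases w with
  | X i' j =>
    have hi : i' = i := hw
    subst hi
    -- the third (non-cycle) neighbour
    obtain ⟨t, hts, htadj, htX⟩ :
        ∃ t, t ∈ s ∧ G'.Adj (SCV.X i' j) t ∧ ∀ j' : Fin n, t ≠ SCV.X i' j' := by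
      by_cases hj : j ∈ Su i'
      · refine ⟨SCV.Z j ⟨0, by omega⟩, Or.inr hj, ?_, by intro j' h; cases h⟩
        exact scAdj Su (by intro h; cases h) (Or.inl ⟨rfl, rfl, hj⟩)
      · have hU : Su i' ≠ Finset.univ := by
          intro h; exact hj (h ▸ Finset.mem_univ j)
        refine ⟨SCV.W i' ⟨0, by omega⟩, ⟨rfl, Or.inr hU⟩, ?_, by intro j' h; cases h⟩
        exact scAdj Su (by intro h; cases h) (Or.inr ⟨rfl, rfl, hj⟩)
    -- two cycle neighbours a, b
    obtain ⟨a, b, hab, ha, hb⟩ :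
        ∃ a b : Fin n, a.val ≠ b.val ∧ G'.Adj (SCV.X i' j) (SCV.X i' a) ∧
          G'.Adj (SCV.X i' j) (SCV.X i' b) := by
      rcases j with ⟨jv, hjn⟩
      by_cases h0 : jv = 0
      · subst h0
        refine ⟨⟨1, by omega⟩, ⟨n - 1, by omega⟩, show (1 : ℕ) ≠ n - 1 by omega, hedge, ?_⟩
        exact scAdj Su (X_ne (show (0 : ℕ) ≠ n - 1 by omega)) (Or.inr ⟨rfl, Or.inr ⟨rfl, rfl⟩⟩)
      · by_cases h1 : jv = 1
        · subst h1
          refine ⟨⟨0, by omega⟩, ⟨2, by omega⟩, show (0 : ℕ) ≠ 2 by omega, hedge.symm, ?_⟩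
          exact scAdj Su (X_ne (show (1 : ℕ) ≠ 2 by omega))
            (Or.inl ⟨rfl, Or.inl ⟨Nat.le_refl 1, rfl⟩⟩)
        · by_cases h2 : jv = n - 1
          · refine ⟨⟨n - 2, by omega⟩, ⟨0, by omega⟩, show n - 2 ≠ 0 by omega, ?_, ?_⟩
            · exact scAdj Su (X_ne (show jv ≠ n - 2 by omega))
                (Or.inr ⟨rfl, Or.inl ⟨show 1 ≤ n - 2 by omega, show jv = n - 2 + 1 by omega⟩⟩)
            · exact scAdj Su (X_ne (show jv ≠ 0 by omega))
                (Or.inl ⟨rfl, Or.inr ⟨h2, rfl⟩⟩)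
          · refine ⟨⟨jv - 1, by omega⟩, ⟨jv + 1, by omega⟩,
              show jv - 1 ≠ jv + 1 by omega, ?_, ?_⟩
            · exact scAdj Su (X_ne (show jv ≠ jv - 1 by omega))
                (Or.inr ⟨rfl, Or.inl ⟨show 1 ≤ jv - 1 by omega, show jv = jv - 1 + 1 by omega⟩⟩)
            · exact scAdj Su (X_ne (show jv ≠ jv + 1 by omega))
                (Or.inl ⟨rfl, Or.inl ⟨show 1 ≤ jv by omega, rfl⟩⟩)
    exact three_le (X_ne hab)
      (Ne.symm (htX a)) (Ne.symm (htX b))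
      (⟨rfl, ha⟩ : SCV.X i' a ∈ s ∩ G'.neighborSet (SCV.X i' j))
      (⟨rfl, hb⟩ : SCV.X i' b ∈ s ∩ G'.neighborSet (SCV.X i' j))
      ⟨hts, htadj⟩
  | W i' q =>
    obtain ⟨hi, hq⟩ := hw
    subst hi
    by_cases h1 : 1 ≤ q.val
    · exact clique3 (fun q => SCV.W i' q)
        (fun a b h => by cases h; rfl)
        (fun q q' _ hq' _ => ⟨rfl, Or.inl hq'⟩)
        (fun q q' h h' hne => scAdj Su (by simpa [SCV.W.injEq] using hne)
          (Or.inl ⟨rfl, Or.inr ⟨h, h'⟩⟩))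
        q h1
    · have hq0 : q.val = 0 := by omega
      have hU : Su i' ≠ Finset.univ := by
        rcases hq with h | h
        · omega
        · exact h
      obtain ⟨j0, hj0⟩ : ∃ j0, j0 ∉ Su i' := by
        by_contra h
        push_neg at h
        exact hU (Finset.eq_univ_iff_forall.mpr h)
      refine three_le (a := SCV.W i' ⟨1, by omega⟩) (b := SCV.W i' ⟨4, by omega⟩)
        (c := SCV.X i' j0)
        (W_ne (show (1 : ℕ) ≠ 4 by omega)) (by intro h; cases h) (by intro h; cases h)
        ⟨⟨rfl, Or.inl (Nat.le_refl 1)⟩, ?_⟩ ⟨⟨rfl, Or.inl (show (1 : ℕ) ≤ 4 by omega)⟩, ?_⟩ ⟨rfl, ?_⟩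
      · exact scAdj Su (W_ne (show q.val ≠ 1 by omega)) (Or.inl ⟨rfl, Or.inl ⟨hq0, Or.inl rfl⟩⟩)
      · exact scAdj Su (W_ne (show q.val ≠ 4 by omega)) (Or.inl ⟨rfl, Or.inl ⟨hq0, Or.inr rfl⟩⟩)
      · exact scAdj Su (by intro h; cases h) (Or.inl ⟨rfl, hq0, hj0⟩)
  | Z j q =>
    by_cases h1 : 1 ≤ q.val
    · exact clique3 (fun q => SCV.Z j q)
        (fun a b h => by cases h; rfl)
        (fun q q' _ hq' _ => Or.inl hq')
        (fun q q' h h' hne => scAdj Su (by simpa [SCV.Z.injEq] using hne)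
          (Or.inl ⟨rfl, Or.inr ⟨h, h'⟩⟩))
        q h1
    · have hq0 : q.val = 0 := by omega
      have hj : j ∈ Su i := by
        rcases hw with h | h
        · omega
        · exact h
      refine three_le (a := SCV.Z j ⟨1, by omega⟩) (b := SCV.Z j ⟨4, by omega⟩)
        (c := SCV.X i j)
        (Z_ne (show (1 : ℕ) ≠ 4 by omega)) (by intro h; cases h) (by intro h; cases h)
        ⟨Or.inl (Nat.le_refl 1), ?_⟩ ⟨Or.inl (show (1 : ℕ) ≤ 4 by omega), ?_⟩ ⟨rfl, ?_⟩
      · exact scAdj Su (Z_ne (show q.val ≠ 1 by omega)) (Or.inl ⟨rfl, Or.inl ⟨hq0, Or.inl rfl⟩⟩)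
      · exact scAdj Su (Z_ne (show q.val ≠ 4 by omega)) (Or.inl ⟨rfl, Or.inl ⟨hq0, Or.inr rfl⟩⟩)
      · exact scAdj Su (by intro h; cases h) (Or.inr ⟨rfl, hq0, hj⟩)

lemma coreNumber_ge_of_mem {V : Type*} [Finite V] (G : SimpleGraph V) {v : V} {s : Set V}
    (hv : v ∈ s) (hs : ∀ w ∈ s, 3 ≤ (s ∩ G.neighborSet w).ncard) :
    3 ≤ coreNumber G v := by
  apply le_csSup
  · refine ⟨Nat.card V, ?_⟩
    rintro k ⟨t, hvt, ht⟩
    calc k ≤ (t ∩ G.neighborSet v).ncard := ht v hvt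
      _ ≤ Nat.card V := by
          rw [← Set.ncard_univ]
          exact Set.ncard_le_ncard (Set.subset_univ _) Set.finite_univ
  · exact ⟨s, hv, hs⟩

/-- Gadget lemma: after adding the single edge `{X_{i,1}, X_{i,2}}` to `G(U,S)`, every
`X_{i,ℓ}` (`ℓ ∈ [n]`) has core number at least 3, every `Z_{j,1}` with `u_j ∈ S_i` has
core number at least 3, and if `S_i ≠ U` then `W_{i,1}` also has core number at least 3. -/
theorem stmt_9 {m n : ℕ} (hn : 3 ≤ n) (hm : 1 ≤ m) (Su : Fin m → Finset (Fin n))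
    (i : Fin m) :
    let G' := scGraph Su ⊔ SimpleGraph.fromEdgeSet
      {s(SCV.X i (⟨0, by omega⟩ : Fin n), SCV.X i (⟨1, by omega⟩ : Fin n))}
    (∀ ℓ : Fin n, 3 ≤ coreNumber G' (SCV.X i ℓ)) ∧
    (∀ j ∈ Su i, 3 ≤ coreNumber G' (SCV.Z j (⟨0, by omega⟩ : Fin 5))) ∧
    (Su i ≠ Finset.univ → 3 ≤ coreNumber G' (SCV.W i (⟨0, by omega⟩ : Fin 5))) := by
  intro G'
  have hkey := gadget_key hn Su i
  refine ⟨?_, ?_, ?_⟩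
  · intro ℓ
    exact coreNumber_ge_of_mem G' (show SCV.X i ℓ ∈ gadgetSet Su i from rfl) hkey
  · intro j hj
    exact coreNumber_ge_of_mem G'
      (show SCV.Z j ⟨0, by omega⟩ ∈ gadgetSet Su i from Or.inr hj) hkey
  · intro hU
    exact coreNumber_ge_of_mem G'
      (show SCV.W i ⟨0, by omega⟩ ∈ gadgetSet Su i from ⟨rfl, Or.inr hU⟩) hkey
end

section
/- Let n ≥ 3, m ≥ 1, and S_1, …, S_m be subsets of U = {u_1, …, u_n}, and let G(U,S) be the associated set-cover graph. Then a follower of G(U,S) has core number at least 3 in G(U,S) if and only if it is one of the 4m vertices W_{i,q} with i ∈ [m] and q ∈ {2,3,4,5}. -/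
section Helpers

variable {m n : ℕ}

instance : Finite (SCV m n) := by
  have hsurj : Function.Surjective
      (fun x : (Fin m × Fin n) ⊕ ((Fin m × Fin 5) ⊕ (Fin n × Fin 5)) =>
      match x with
      | .inl (i, j) => (SCV.X i j : SCV m n)
      | .inr (.inl (i, q)) => SCV.W i q
      | .inr (.inr (j, q)) => SCV.Z j q) := by
    intro v
    cases v with
    | X i j => exact ⟨.inl (i, j), rfl⟩
    | W i q => exact ⟨.inr (.inl (i, q)), rfl⟩
    | Z j q => exact ⟨.inr (.inr (j, q)), rfl⟩
  exact Finite.of_surjective _ hsurj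

lemma pair_contra {V : Type*} (G : SimpleGraph V) {s : Set V}
    (h3 : ∀ w ∈ s, 3 ≤ (s ∩ G.neighborSet w).ncard) {v a b : V}
    (hv : v ∈ s) (hsub : s ∩ G.neighborSet v ⊆ {a, b}) : False := by
  have h1 := h3 v hv
  have h2 : (s ∩ G.neighborSet v).ncard ≤ ({a, b} : Set V).ncard :=
    Set.ncard_le_ncard hsub (Set.toFinite _)
  have h4 : ({a, b} : Set V).ncard ≤ 2 := by
    have := Set.ncard_insert_le a ({b} : Set V)
    simpa using this
  omega

lemma three_le_ncard {V : Type*} [Finite V] {a b c : V} {t : Set V}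
    (hab : a ≠ b) (hac : a ≠ c) (hbc : b ≠ c)
    (ha : a ∈ t) (hb : b ∈ t) (hc : c ∈ t) : 3 ≤ t.ncard := by
  have hsub : ({a, b, c} : Set V) ⊆ t := by
    intro x hx
    rcases hx with rfl | rfl | rfl <;> assumption
  have h3 : ({a, b, c} : Set V).ncard = 3 := by
    rw [Set.ncard_insert_of_notMem (by simp [hab, hac]),
      Set.ncard_insert_of_notMem (by simp [hbc]), Set.ncard_singleton]
  calc 3 = ({a, b, c} : Set V).ncard := h3.symm
    _ ≤ t.ncard := Set.ncard_le_ncard hsub t.toFinite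

lemma bddAbove_core {V : Type*} [Finite V] (G : SimpleGraph V) (v : V) :
    BddAbove {k : ℕ | ∃ s : Set V, v ∈ s ∧ ∀ w ∈ s, k ≤ (s ∩ G.neighborSet w).ncard} := by
  refine ⟨Nat.card V, ?_⟩
  rintro k ⟨s, hv, h⟩
  calc k ≤ (s ∩ G.neighborSet v).ncard := h v hv
    _ ≤ Nat.card V := by
        rw [← Set.ncard_univ]
        exact Set.ncard_le_ncard (Set.subset_univ _) Set.finite_univ

variable (Su : Fin m → Finset (Fin n))

lemma adj_X {i : Fin m} {j : Fin n} {u : SCV m n}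
    (h : (scGraph Su).Adj (SCV.X i j) u) :
    (∃ j' : Fin n, u = SCV.X i j' ∧
      ((1 ≤ j.val ∧ j'.val = j.val + 1) ∨ (j.val = n - 1 ∧ j'.val = 0)
        ∨ (1 ≤ j'.val ∧ j.val = j'.val + 1) ∨ (j'.val = n - 1 ∧ j.val = 0))) ∨
    (u = SCV.W i 0 ∧ j ∉ Su i) ∨ (u = SCV.Z j 0 ∧ j ∈ Su i) := by
  rw [scGraph, SimpleGraph.fromRel_adj] at h
  obtain ⟨hne, h | h⟩ := h
  · cases u with
    | X i' j' =>
      obtain ⟨rfl, h⟩ := h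
      exact .inl ⟨j', rfl, by tauto⟩
    | W i' q => exact absurd h id
    | Z j' q =>
      obtain ⟨rfl, hq, hmem⟩ := h
      have : q = 0 := Fin.ext hq
      subst this
      exact .inr (.inr ⟨rfl, hmem⟩)
  · cases u with
    | X i' j' =>
      obtain ⟨rfl, h⟩ := h
      exact .inl ⟨j', rfl, by tauto⟩
    | W i' q =>
      obtain ⟨rfl, hq, hmem⟩ := h
      have : q = 0 := Fin.ext hq
      subst this
      exact .inr (.inl ⟨rfl, hmem⟩)
    | Z j' q => exact absurd h id

lemma adj_W0 {i : Fin m} {u : SCV m n}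
    (h : (scGraph Su).Adj (SCV.W i 0) u) :
    (∃ q : Fin 5, u = SCV.W i q ∧ (q.val = 1 ∨ q.val = 4)) ∨
    (∃ j : Fin n, u = SCV.X i j ∧ j ∉ Su i) := by
  rw [scGraph, SimpleGraph.fromRel_adj] at h
  obtain ⟨hne, h | h⟩ := h
  · cases u with
    | X i' j =>
      obtain ⟨rfl, hq, hmem⟩ := h
      exact .inr ⟨j, rfl, hmem⟩
    | W i' q =>
      obtain ⟨rfl, h⟩ := h
      rcases h with ⟨-, hq⟩ | ⟨h1, -⟩
      · exact .inl ⟨q, rfl, hq⟩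
      · simp at h1
    | Z j q => exact absurd h id
  · cases u with
    | X i' j => exact absurd h id
    | W i' q =>
      obtain ⟨rfl, h⟩ := h
      rcases h with ⟨-, hq⟩ | ⟨-, h1⟩
      · simp at hq
      · simp at h1
    | Z j q => exact absurd h id

lemma adj_Z0 {j : Fin n} {u : SCV m n}
    (h : (scGraph Su).Adj (SCV.Z j 0) u) :
    (∃ q : Fin 5, u = SCV.Z j q ∧ (q.val = 1 ∨ q.val = 4)) ∨
    (∃ i : Fin m, u = SCV.X i j ∧ j ∈ Su i) := by
  rw [scGraph, SimpleGraph.fromRel_adj] at h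
  obtain ⟨hne, h | h⟩ := h
  · cases u with
    | X i j' => exact absurd h id
    | W i q => exact absurd h id
    | Z j' q =>
      obtain ⟨rfl, h⟩ := h
      rcases h with ⟨-, hq⟩ | ⟨h1, -⟩
      · exact .inl ⟨q, rfl, hq⟩
      · simp at h1
  · cases u with
    | X i j' =>
      obtain ⟨rfl, hq, hmem⟩ := h
      exact .inr ⟨i, rfl, hmem⟩
    | W i q => exact absurd h id
    | Z j' q =>
      obtain ⟨rfl, h⟩ := h
      rcases h with ⟨-, hq⟩ | ⟨-, h1⟩
      · simp at hq
      · simp at h1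

lemma adj_WW {i : Fin m} {q q' : Fin 5} (hne : q ≠ q')
    (hq : 1 ≤ q.val) (hq' : 1 ≤ q'.val) :
    (scGraph Su).Adj (SCV.W i q) (SCV.W i q') := by
  rw [scGraph, SimpleGraph.fromRel_adj]
  exact ⟨by simp [hne], Or.inl ⟨rfl, Or.inr ⟨hq, hq'⟩⟩⟩

variable {Su}

lemma X_notin {s : Set (SCV m n)} (hn : 3 ≤ n)
    (h3 : ∀ w ∈ s, 3 ≤ (s ∩ (scGraph Su).neighborSet w).ncard) :
    ∀ (i : Fin m) (j : Fin n), SCV.X i j ∉ s := by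
  intro i
  have key : ∀ N (j : Fin n), (if j.val = 0 then n else j.val) ≤ N → SCV.X i j ∉ s := by
    intro N
    induction N with
    | zero =>
      intro j hj
      exfalso
      split at hj <;> omega
    | succ N ih =>
      intro j hj hjs
      have hjlt := j.isLt
      have hj2 : (j.val = 0 ∧ n ≤ N + 1) ∨ (1 ≤ j.val ∧ j.val ≤ N + 1) := by
        by_cases h0 : j.val = 0
        · exact Or.inl ⟨h0, by simpa [h0] using hj⟩
        · exact Or.inr ⟨by omega, by simpa [h0] using hj⟩
      by_cases hlast : j.val = n - 1
      · by_cases hc : j ∈ Su i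
        · refine pair_contra (scGraph Su) h3 hjs
            (a := SCV.X i ⟨0, by omega⟩) (b := SCV.Z j 0) ?_
          rintro u ⟨hus, hadj⟩
          rcases adj_X Su hadj with ⟨j', rfl, hd⟩ | ⟨rfl, hns⟩ | ⟨rfl, hin⟩
          · have hj'lt := j'.isLt
            rcases hd with ⟨h1, h2⟩ | ⟨h1, h2⟩ | ⟨h1, h2⟩ | ⟨h1, h2⟩
            · omega
            · left
              congr 1
              exact Fin.ext h2
            · exfalso
              refine ih j' ?_ hus
              split <;> omega
            · exfalso
              refine ih j' ?_ hus
              split <;> omega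
          · exact absurd hc hns
          · right; rfl
        · refine pair_contra (scGraph Su) h3 hjs
            (a := SCV.X i ⟨0, by omega⟩) (b := SCV.W i 0) ?_
          rintro u ⟨hus, hadj⟩
          rcases adj_X Su hadj with ⟨j', rfl, hd⟩ | ⟨rfl, hns⟩ | ⟨rfl, hin⟩
          · have hj'lt := j'.isLt
            rcases hd with ⟨h1, h2⟩ | ⟨h1, h2⟩ | ⟨h1, h2⟩ | ⟨h1, h2⟩
            · omega
            · left
              congr 1
              exact Fin.ext h2
            · exfalso
              refine ih j' ?_ hus
              split <;> omega
            · exfalso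
              refine ih j' ?_ hus
              split <;> omega
          · right; rfl
          · exact absurd hin hc
      · by_cases hc : j ∈ Su i
        · refine pair_contra (scGraph Su) h3 hjs
            (a := SCV.X i ⟨j.val + 1, by omega⟩) (b := SCV.Z j 0) ?_
          rintro u ⟨hus, hadj⟩
          rcases adj_X Su hadj with ⟨j', rfl, hd⟩ | ⟨rfl, hns⟩ | ⟨rfl, hin⟩
          · have hj'lt := j'.isLt
            rcases hd with ⟨h1, h2⟩ | ⟨h1, h2⟩ | ⟨h1, h2⟩ | ⟨h1, h2⟩
            · left
              congr 1
              exact Fin.ext h2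
            · omega
            · exfalso
              refine ih j' ?_ hus
              split <;> omega
            · exfalso
              refine ih j' ?_ hus
              split <;> omega
          · exact absurd hc hns
          · right; rfl
        · refine pair_contra (scGraph Su) h3 hjs
            (a := SCV.X i ⟨j.val + 1, by omega⟩) (b := SCV.W i 0) ?_
          rintro u ⟨hus, hadj⟩
          rcases adj_X Su hadj with ⟨j', rfl, hd⟩ | ⟨rfl, hns⟩ | ⟨rfl, hin⟩
          · have hj'lt := j'.isLt
            rcases hd with ⟨h1, h2⟩ | ⟨h1, h2⟩ | ⟨h1, h2⟩ | ⟨h1, h2⟩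
            · left
              congr 1
              exact Fin.ext h2
            · omega
            · exfalso
              refine ih j' ?_ hus
              split <;> omega
            · exfalso
              refine ih j' ?_ hus
              split <;> omega
          · right; rfl
          · exact absurd hin hc
  intro j
  exact key n j (by have := j.isLt; split <;> omega)

lemma W0_notin {s : Set (SCV m n)} (hn : 3 ≤ n)
    (h3 : ∀ w ∈ s, 3 ≤ (s ∩ (scGraph Su).neighborSet w).ncard) :
    ∀ i : Fin m, SCV.W i 0 ∉ s := by
  intro i hs
  refine pair_contra (scGraph Su) h3 hs (a := SCV.W i 1) (b := SCV.W i 4) ?_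
  rintro u ⟨hus, hadj⟩
  rcases adj_W0 Su hadj with ⟨q, rfl, hq | hq⟩ | ⟨j, rfl, -⟩
  · left; congr 1; exact Fin.ext hq
  · right; show SCV.W i q = SCV.W i 4; congr 1; exact Fin.ext hq
  · exact absurd hus (X_notin hn h3 i j)

lemma Z0_notin {s : Set (SCV m n)} (hn : 3 ≤ n)
    (h3 : ∀ w ∈ s, 3 ≤ (s ∩ (scGraph Su).neighborSet w).ncard) :
    ∀ j : Fin n, SCV.Z j 0 ∉ s := by
  intro j hs
  refine pair_contra (scGraph Su) h3 hs (a := SCV.Z j 1) (b := SCV.Z j 4) ?_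
  rintro u ⟨hus, hadj⟩
  rcases adj_Z0 Su hadj with ⟨q, rfl, hq | hq⟩ | ⟨i, rfl, -⟩
  · left; congr 1; exact Fin.ext hq
  · right; show SCV.Z j q = SCV.Z j 4; congr 1; exact Fin.ext hq
  · exact absurd hus (X_notin hn h3 i j)

lemma core_set (Su : Fin m → Finset (Fin n)) (i : Fin m) :
    ∀ w ∈ ({SCV.W i 1, SCV.W i 2, SCV.W i 3, SCV.W i 4} : Set (SCV m n)),
      3 ≤ (({SCV.W i 1, SCV.W i 2, SCV.W i 3, SCV.W i 4} : Set (SCV m n)) ∩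
        (scGraph Su).neighborSet w).ncard := by
  intro w hw
  simp only [Set.mem_insert_iff, Set.mem_singleton_iff] at hw
  rcases hw with rfl | rfl | rfl | rfl
  · refine three_le_ncard (a := SCV.W i 2) (b := SCV.W i 3) (c := SCV.W i 4)
      ?_ ?_ ?_ ⟨by simp, ?_⟩ ⟨by simp, ?_⟩ ⟨by simp, ?_⟩ <;>
      first
        | (simp only [ne_eq, SCV.W.injEq]; rintro ⟨-, h⟩; exact absurd h (by decide))
        | exact adj_WW Su (by decide) (by decide) (by decide)
  · refine three_le_ncard (a := SCV.W i 1) (b := SCV.W i 3) (c := SCV.W i 4)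
      ?_ ?_ ?_ ⟨by simp, ?_⟩ ⟨by simp, ?_⟩ ⟨by simp, ?_⟩ <;>
      first
        | (simp only [ne_eq, SCV.W.injEq]; rintro ⟨-, h⟩; exact absurd h (by decide))
        | exact adj_WW Su (by decide) (by decide) (by decide)
  · refine three_le_ncard (a := SCV.W i 1) (b := SCV.W i 2) (c := SCV.W i 4)
      ?_ ?_ ?_ ⟨by simp, ?_⟩ ⟨by simp, ?_⟩ ⟨by simp, ?_⟩ <;>
      first
        | (simp only [ne_eq, SCV.W.injEq]; rintro ⟨-, h⟩; exact absurd h (by decide))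
        | exact adj_WW Su (by decide) (by decide) (by decide)
  · refine three_le_ncard (a := SCV.W i 1) (b := SCV.W i 2) (c := SCV.W i 3)
      ?_ ?_ ?_ ⟨by simp, ?_⟩ ⟨by simp, ?_⟩ ⟨by simp, ?_⟩ <;>
      first
        | (simp only [ne_eq, SCV.W.injEq]; rintro ⟨-, h⟩; exact absurd h (by decide))
        | exact adj_WW Su (by decide) (by decide) (by decide)

end Helpers

/-- In `G(U,S)` itself, a follower has core number at least 3 if and only if it is one of
the `4m` vertices `W_{i,q}` with `q ∈ {2,3,4,5}`. -/

theorem stmt_10 {m n : ℕ} (hn : 3 ≤ n) (hm : 1 ≤ m) (Su : Fin m → Finset (Fin n)) :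
    ∀ v : SCV m n, scFollower v →
      (3 ≤ coreNumber (scGraph Su) v ↔
        ∃ (i : Fin m) (q : Fin 5), 1 ≤ q.val ∧ v = SCV.W i q) := by
  intro v hf
  constructor
  · intro hcore
    by_contra hnot
    push_neg at hnot
    have h2 : coreNumber (scGraph Su) v ≤ 2 := by
      rw [coreNumber]
      have hne : {k : ℕ | ∃ s : Set (SCV m n), v ∈ s ∧
          ∀ w ∈ s, k ≤ (s ∩ (scGraph Su).neighborSet w).ncard}.Nonempty :=
        ⟨0, ⟨{v}, Set.mem_singleton v, fun w _ => Nat.zero_le _⟩⟩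
      refine csSup_le hne ?_
      rintro k ⟨s, hvs, hk⟩
      by_contra hk3
      push_neg at hk3
      have h3 : ∀ w ∈ s, 3 ≤ (s ∩ (scGraph Su).neighborSet w).ncard :=
        fun w hw => le_trans (by omega) (hk w hw)
      exfalso
      cases v with
      | X i j => exact X_notin hn h3 i j hvs
      | W i q =>
        have hq0 : q = 0 := by
          by_contra hq
          have h1 : 1 ≤ q.val := by
            rcases Nat.eq_zero_or_pos q.val with h | h
            · exact absurd (Fin.ext h) hq
            · exact h
          exact hnot i q h1 rfl
        subst hq0
        exact W0_notin hn h3 i hvs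
      | Z j q =>
        have hq0 : q = 0 := Fin.ext hf
        subst hq0
        exact Z0_notin hn h3 j hvs
    omega
  · rintro ⟨i, q, hq, rfl⟩
    have hmem : 3 ∈ {k : ℕ | ∃ s : Set (SCV m n), SCV.W i q ∈ s ∧
        ∀ w ∈ s, k ≤ (s ∩ (scGraph Su).neighborSet w).ncard} := by
      refine ⟨{SCV.W i 1, SCV.W i 2, SCV.W i 3, SCV.W i 4}, ?_, core_set Su i⟩
      have := q.isLt
      fin_cases q
      · simp at hq
      · simp
      · simp
      · simp
      · simp
    rw [coreNumber]
    exact le_csSup (bddAbove_core _ _) hmem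
end

section
/- Let n ≥ 3, m ≥ 1, and S_1, …, S_m be proper subsets of U = {u_1, …, u_n}, and let G(U,S) be the associated set-cover graph. If there exists J ⊆ [m] with |J| = t and ∪_{i∈J} S_i = U, then there exists a set W of exactly t unordered pairs of distinct followers, disjoint from E(G(U,S)), such that in the graph G(U,S) ∪ W at least 4m + n(t+1) + t followers have core number at least 3. -/
/-!
Add the chord `{X_{i,1}, X_{i,2}}` for each of the `t` indices `i ∈ J`, closing the path of
row `i` into a cycle. The vertex set consisting of these `t` cycles, all `Z`-gadgets, all cliques
`{W_{i,2}, …, W_{i,5}}` and the vertices `W_{i,1}` with `i ∈ J` then has minimum degree 3: on a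
cycle, `X_{i,j}` gets its third neighbour `Z_{j,1}` or `W_{i,1}` according as `u_j ∈ S_i`;
`W_{i,1}` is adjacent to some `X_{i,j}` because `S_i ≠ U`; and `Z_{j,1}` is adjacent to `X_{i,j}`
for an `i ∈ J` with `u_j ∈ S_i` because `J` is a cover. Its followers number
`tn + 4m + t + n`.
-/

open SimpleGraph

section CoreNumber

variable {V : Type*} [Finite V] {G : SimpleGraph V} {s : Set V} {v : V}

lemma le_coreNumber_of_forall_le {k : ℕ} (hv : v ∈ s)
    (h : ∀ w ∈ s, k ≤ (s ∩ G.neighborSet w).ncard) : k ≤ coreNumber G v := by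
  refine le_csSup ⟨Nat.card V, ?_⟩ ⟨s, hv, h⟩
  rintro k' ⟨s', hv', h'⟩
  exact (h' v hv').trans ((Set.ncard_le_ncard (Set.subset_univ _)).trans (Set.ncard_univ V).le)

lemma three_le_ncard_inter_neighborSet {a b c : V} (hva : G.Adj v a) (hvb : G.Adj v b)
    (hvc : G.Adj v c) (ha : a ∈ s) (hb : b ∈ s) (hc : c ∈ s)
    (hab : a ≠ b) (hac : a ≠ c) (hbc : b ≠ c) : 3 ≤ (s ∩ G.neighborSet v).ncard :=
  (Set.two_lt_ncard_iff (Set.toFinite _)).2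
    ⟨a, b, c, ⟨ha, hva⟩, ⟨hb, hvb⟩, ⟨hc, hvc⟩, hab, hac, hbc⟩

lemma SimpleGraph.IsClique.ncard_sub_one_le {t : Set V} (ht : G.IsClique t) (hts : t ⊆ s)
    (hv : v ∈ t) : t.ncard - 1 ≤ (s ∩ G.neighborSet v).ncard := by
  rw [← Set.ncard_sdiff_singleton_of_mem hv]
  exact Set.ncard_le_ncard fun w ⟨hw, hwv⟩ => ⟨hts hw, ht hv hw (Ne.symm hwv)⟩

end CoreNumber

instance inst_s11 {m n : ℕ} : Finite (SCV m n) :=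
  Finite.of_injective (β := (Fin m × Fin n) ⊕ (Fin m × Fin 5) ⊕ (Fin n × Fin 5))
    (fun | .X i j => .inl (i, j) | .W i q => .inr (.inl (i, q)) | .Z j q => .inr (.inr (j, q)))
    (by rintro (_ | _ | _) (_ | _ | _) h <;> simp_all)

def IsCyclicSucc {n : ℕ} (j k : Fin n) : Prop :=
  k.val = j.val + 1 ∨ j.val = n - 1 ∧ k.val = 0

lemma exists_isCyclicSucc_ne {n : ℕ} (hn : 3 ≤ n) (j : Fin n) :
    ∃ a b : Fin n, a ≠ b ∧ IsCyclicSucc j a ∧ IsCyclicSucc b j := by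
  refine ⟨⟨if j.val = n - 1 then 0 else j.val + 1, by split_ifs <;> omega⟩,
    ⟨if j.val = 0 then n - 1 else j.val - 1, by split_ifs <;> omega⟩, ?_⟩
  simp only [IsCyclicSucc, ne_eq, Fin.ext_iff]
  split_ifs <;> omega

section Reduction

variable {m n : ℕ} (hn : 3 ≤ n) (Su : Fin m → Finset (Fin n)) (J : Finset (Fin m))

-- With 0-based indices this is `{X_{i,1}, X_{i,2}}`, the edge missing from the cycle on row `i`.
def chord (i : Fin m) : Sym2 (SCV m n) := s(.X i ⟨0, by omega⟩, .X i ⟨1, by omega⟩)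

def scGraphAug : SimpleGraph (SCV m n) :=
  scGraph Su ⊔ fromEdgeSet (chord hn '' J)

def coverCore : Set (SCV m n)
  | .X i _ => i ∈ J
  | .W i q => i ∈ J ∨ q ≠ 0
  | .Z _ _ => True

variable {hn Su J}

lemma chord_injective : Function.Injective (chord (m := m) hn) := by
  intro i i' h
  simpa [chord] using h

lemma chord_not_isDiag (i : Fin m) : ¬ (chord hn i).IsDiag := by
  simp [chord]

lemma scFollower_of_mem_chord {i : Fin m} {v : SCV m n} (hv : v ∈ chord hn i) : scFollower v := by
  rcases Sym2.mem_iff.1 hv with rfl | rfl <;> trivial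

lemma chord_notMem_edgeSet (i : Fin m) : chord hn i ∉ (scGraph Su).edgeSet := by
  rintro ⟨-, h | h⟩ <;> simp only [scRel] at h <;> omega

lemma scGraph_adj_of_scRel {v w : SCV m n} (hne : v ≠ w) (h : scRel Su v w) :
    (scGraph Su).Adj v w :=
  (fromRel_adj _ _ _).2 ⟨hne, .inl h⟩

lemma scGraphAug_adj_X {i : Fin m} {j k : Fin n} (hi : i ∈ J) (h : IsCyclicSucc j k) :
    (scGraphAug hn Su J).Adj (.X i j) (.X i k) := by
  unfold IsCyclicSucc at h
  have hjk : SCV.X (m := m) i j ≠ .X i k := by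
    simp only [ne_eq, SCV.X.injEq, Fin.ext_iff, true_and]
    omega
  by_cases hj : j.val = 0
  · refine .inr ((fromEdgeSet_adj _).2 ⟨⟨i, hi, ?_⟩, hjk⟩)
    have hk : k.val = 1 := by omega
    simp [chord, Fin.ext_iff, hj, hk]
  · exact .inl (scGraph_adj_of_scRel hjk (by simp only [scRel, true_and]; omega))

lemma isClique_W (i : Fin m) : (scGraph Su).IsClique (SCV.W (n := n) i '' {q | q ≠ 0}) := by
  rintro _ ⟨q, hq, rfl⟩ _ ⟨q', hq', rfl⟩ hne
  refine scGraph_adj_of_scRel hne ?_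
  simp only [Set.mem_ofPred_eq, ne_eq, Fin.ext_iff, Fin.val_zero] at hq hq'
  exact ⟨rfl, .inr ⟨by omega, by omega⟩⟩

lemma isClique_Z (j : Fin n) : (scGraph Su).IsClique (SCV.Z (m := m) j '' {q | q ≠ 0}) := by
  rintro _ ⟨q, hq, rfl⟩ _ ⟨q', hq', rfl⟩ hne
  refine scGraph_adj_of_scRel hne ?_
  simp only [Set.mem_ofPred_eq, ne_eq, Fin.ext_iff, Fin.val_zero] at hq hq'
  exact ⟨rfl, .inr ⟨by omega, by omega⟩⟩

lemma ncard_setOf_ne_zero_fin_five : {q : Fin 5 | q ≠ 0}.ncard = 4 := by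
  rw [Set.ncard_eq_toFinset_card']
  decide

lemma three_le_ncard_coverCore_X {i : Fin m} (j : Fin n) (hi : i ∈ J) :
    3 ≤ (coverCore J ∩ (scGraphAug hn Su J).neighborSet (.X i j)).ncard := by
  obtain ⟨a, b, hab, hja, hbj⟩ := exists_isCyclicSucc_ne hn j
  have hXa : (scGraphAug hn Su J).Adj (.X i j) (.X i a) := scGraphAug_adj_X hi hja
  have hXb : (scGraphAug hn Su J).Adj (.X i j) (.X i b) := (scGraphAug_adj_X hi hbj).symm
  have hab' : SCV.X (m := m) i a ≠ .X i b := by simpa using hab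
  by_cases hj : j ∈ Su i
  · have hZ : (scGraphAug hn Su J).Adj (.X i j) (.Z j 0) :=
      .inl (scGraph_adj_of_scRel (by simp) ⟨rfl, rfl, hj⟩)
    exact three_le_ncard_inter_neighborSet hXa hXb hZ hi hi trivial hab' (by simp) (by simp)
  · have hW : (scGraphAug hn Su J).Adj (.W i 0) (.X i j) :=
      .inl (scGraph_adj_of_scRel (by simp) ⟨rfl, rfl, hj⟩)
    exact three_le_ncard_inter_neighborSet hXa hXb hW.symm hi hi (Or.inl hi) hab' (by simp)
      (by simp)

lemma three_le_ncard_coverCore_W {i : Fin m} {q : Fin 5} (hproper : Su i ≠ Finset.univ)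
    (hv : .W i q ∈ coverCore (n := n) J) :
    3 ≤ (coverCore J ∩ (scGraphAug hn Su J).neighborSet (.W i q)).ncard := by
  by_cases hq : q = 0
  · subst hq
    have hi : i ∈ J := hv.resolve_right (by simp)
    obtain ⟨j, hj⟩ : ∃ j, j ∉ Su i := by simpa [Finset.eq_univ_iff_forall] using hproper
    have h1 : (scGraphAug hn Su J).Adj (.W i 0) (.W i 1) :=
      .inl (scGraph_adj_of_scRel (by simp) ⟨rfl, .inl ⟨rfl, .inl rfl⟩⟩)
    have h4 : (scGraphAug hn Su J).Adj (.W i 0) (.W i 4) :=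
      .inl (scGraph_adj_of_scRel (by simp) ⟨rfl, .inl ⟨rfl, .inr rfl⟩⟩)
    have hX : (scGraphAug hn Su J).Adj (.W i 0) (.X i j) :=
      .inl (scGraph_adj_of_scRel (by simp) ⟨rfl, rfl, hj⟩)
    exact three_le_ncard_inter_neighborSet h1 h4 hX (Or.inr (by decide)) (Or.inr (by decide)) hi
      (by simp) (by simp) (by simp)
  · calc 3 = (SCV.W i '' {q | q ≠ 0}).ncard - 1 := by
          rw [Set.ncard_image_of_injective _ fun _ _ h => (SCV.W.inj h).2,
            ncard_setOf_ne_zero_fin_five]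
      _ ≤ _ := ((isClique_W i).mono le_sup_left).ncard_sub_one_le
          (by rintro _ ⟨q', hq', rfl⟩; exact .inr hq') ⟨q, hq, rfl⟩

lemma three_le_ncard_coverCore_Z {j : Fin n} (q : Fin 5) (hcover : ∃ i ∈ J, j ∈ Su i) :
    3 ≤ (coverCore J ∩ (scGraphAug hn Su J).neighborSet (.Z j q)).ncard := by
  by_cases hq : q = 0
  · subst hq
    obtain ⟨i, hi, hj⟩ := hcover
    have h1 : (scGraphAug hn Su J).Adj (.Z j 0) (.Z j 1) :=
      .inl (scGraph_adj_of_scRel (by simp) ⟨rfl, .inl ⟨rfl, .inl rfl⟩⟩)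
    have h4 : (scGraphAug hn Su J).Adj (.Z j 0) (.Z j 4) :=
      .inl (scGraph_adj_of_scRel (by simp) ⟨rfl, .inl ⟨rfl, .inr rfl⟩⟩)
    have hX : (scGraphAug hn Su J).Adj (.X i j) (.Z j 0) :=
      .inl (scGraph_adj_of_scRel (by simp) ⟨rfl, rfl, hj⟩)
    exact three_le_ncard_inter_neighborSet h1 h4 hX.symm trivial trivial hi
      (by simp) (by simp) (by simp)
  · calc 3 = (SCV.Z (m := m) j '' {q | q ≠ 0}).ncard - 1 := by
          rw [Set.ncard_image_of_injective _ fun _ _ h => (SCV.Z.inj h).2,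
            ncard_setOf_ne_zero_fin_five]
      _ ≤ _ := ((isClique_Z j).mono le_sup_left).ncard_sub_one_le
          (by rintro _ ⟨_, _, rfl⟩; trivial) ⟨q, hq, rfl⟩

lemma three_le_coreNumber_of_mem_coverCore (hproper : ∀ i, Su i ≠ Finset.univ)
    (hcover : ∀ j, ∃ i ∈ J, j ∈ Su i) {v : SCV m n} (hv : v ∈ coverCore J) :
    3 ≤ coreNumber (scGraphAug hn Su J) v := by
  refine le_coreNumber_of_forall_le hv fun
    | .X i j, hw => three_le_ncard_coverCore_X j hw
    | .W i q, hw => three_le_ncard_coverCore_W (hproper i) hw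
    | .Z j q, _ => three_le_ncard_coverCore_Z q (hcover j)

lemma le_ncard_scFollower_coverCore :
    J.card * n + 4 * m + J.card + n ≤
      {v : SCV m n | scFollower v ∧ v ∈ coverCore J}.ncard := by
  let f : (J × Fin n) ⊕ (Fin m × Fin 4) ⊕ J ⊕ Fin n → SCV m n
    | .inl (i, j) => .X i j
    | .inr (.inl (i, q)) => .W i q.succ
    | .inr (.inr (.inl i)) => .W i 0
    | .inr (.inr (.inr j)) => .Z j 0
  have hf : f.Injective := by
    rintro (⟨i, j⟩ | ⟨i, q⟩ | i | j) (⟨i', j'⟩ | ⟨i', q'⟩ | i' | j') h <;>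
      simp only [f, SCV.X.injEq, SCV.W.injEq, SCV.Z.injEq, reduceCtorEq] at h ⊢ <;>
      grind
  calc J.card * n + 4 * m + J.card + n
        = Nat.card ((J × Fin n) ⊕ (Fin m × Fin 4) ⊕ J ⊕ Fin n) := by
        rw [Nat.card_eq_fintype_card]
        simp only [Fintype.card_sum, Fintype.card_prod, Fintype.card_coe, Fintype.card_fin]
        ring
    _ = (Set.range f).ncard := (Set.ncard_range_of_injective hf).symm
    _ ≤ _ := by
        refine Set.ncard_le_ncard ?_
        rintro _ ⟨(⟨⟨i, hi⟩, j⟩ | ⟨i, q⟩ | ⟨i, hi⟩ | j), rfl⟩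
        exacts [⟨trivial, hi⟩, ⟨trivial, Or.inr q.succ_ne_zero⟩, ⟨trivial, Or.inl hi⟩,
          ⟨rfl, trivial⟩]

end Reduction

theorem stmt_11_general {m n : ℕ} (hn : 3 ≤ n) (Su : Fin m → Finset (Fin n))
    (hproper : ∀ i, Su i ≠ Finset.univ) (t : ℕ)
    (J : Finset (Fin m)) (hJcard : J.card = t)
    (hcover : ∀ j : Fin n, ∃ i ∈ J, j ∈ Su i) :
    ∃ W : Finset (Sym2 (SCV m n)),
      W.card = t ∧
      (∀ e ∈ W, ¬ e.IsDiag) ∧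
      (∀ e ∈ W, ∀ v ∈ e, scFollower v) ∧
      (∀ e ∈ W, e ∉ (scGraph Su).edgeSet) ∧
      4 * m + n * (t + 1) + t ≤
        {v : SCV m n | scFollower v ∧
          3 ≤ coreNumber
            (scGraph Su ⊔ SimpleGraph.fromEdgeSet (↑W : Set (Sym2 (SCV m n)))) v}.ncard := by
  classical
  refine ⟨J.image (chord hn), ?_, Finset.forall_mem_image.2 fun i _ => chord_not_isDiag i,
    Finset.forall_mem_image.2 fun i _ _ => scFollower_of_mem_chord,
    Finset.forall_mem_image.2 fun i _ => chord_notMem_edgeSet i, ?_⟩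
  · rw [Finset.card_image_of_injective _ chord_injective, hJcard]
  · rw [Finset.coe_image]
    calc 4 * m + n * (t + 1) + t = J.card * n + 4 * m + J.card + n := by rw [hJcard]; ring
      _ ≤ _ := le_ncard_scFollower_coverCore
      _ ≤ _ := Set.ncard_le_ncard fun _ ⟨hv, hcore⟩ =>
        show _ ∧ _ from ⟨hv, three_le_coreNumber_of_mem_coverCore hproper hcover hcore⟩

/-- Completeness direction of the NP-hardness reduction (Theorem 4): if `t` of the proper
sets `S_i` cover `U`, then one can add exactly `t` non-edges between distinct followers so
that at least `4m + n(t+1) + t` followers get core number at least 3. -/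
theorem stmt_11 {m n : ℕ} (hn : 3 ≤ n) (hm : 1 ≤ m) (Su : Fin m → Finset (Fin n))
    (hproper : ∀ i, Su i ≠ Finset.univ) (t : ℕ)
    (J : Finset (Fin m)) (hJcard : J.card = t)
    (hcover : ∀ j : Fin n, ∃ i ∈ J, j ∈ Su i) :
    ∃ W : Finset (Sym2 (SCV m n)),
      W.card = t ∧
      (∀ e ∈ W, ¬ e.IsDiag) ∧
      (∀ e ∈ W, ∀ v ∈ e, scFollower v) ∧
      (∀ e ∈ W, e ∉ (scGraph Su).edgeSet) ∧
      4 * m + n * (t + 1) + t ≤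
        {v : SCV m n | scFollower v ∧
          3 ≤ coreNumber
            (scGraph Su ⊔ SimpleGraph.fromEdgeSet (↑W : Set (Sym2 (SCV m n)))) v}.ncard :=
  stmt_11_general hn Su hproper t J hJcard hcover
end

section
/- Let n ≥ 3, m ≥ 1, t ≥ 1, and S_1, …, S_m be subsets of U = {u_1, …, u_n}, and let G(U,S) be the associated set-cover graph. If there exists a set W of at most t unordered pairs of distinct followers, disjoint from E(G(U,S)), such that in the graph G(U,S) ∪ W at least 4m + n(t+1) + t followers have core number at least 3, then there exists J ⊆ [m] with |J| ≤ t and ∪_{i∈J} S_i = U. -/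
/-!
Let `C` be the 3-core of `H = G(U,S) ∪ W`. Every vertex of `C` has three `H`-neighbours in `C`,
so its deficit `3 - deg_{G[C]} v` is made up by edges of `W`, and the deficits over `C` sum to at
most `2|W| ≤ 2t`. A row `i` meeting `C` has deficit at least 2, at the two ends of its part of the
path `X_{i,·}` (each `X_{i,j}` has a single neighbour off that path). A row missing `C` contributes
at most four followers plus `W_{i,1}`, which then has deficit 1; likewise `Z_{j,1}` has deficit 1
when no `X_{i,j}` with `u_j ∈ S_i` lies in `C`. Weighing the follower count `4m + n(t+1) + t`
against this budget leaves no `u_j` uncovered and at most `t` rows meeting `C`; these rows are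
the cover.
-/

open Finset

theorem two_le_sum_two_sub_card_adjacent {ι : Type*} {f : ι → ℕ} (hf : Function.Injective f)
    {T : Finset ι} (hT : T.Nonempty) :
    2 ≤ ∑ j ∈ T, (2 - #{j' ∈ T | f j = f j' + 1 ∨ f j' = f j + 1}) := by
  classical
  obtain ⟨a, ha, hmin⟩ := T.exists_min_image f hT
  obtain ⟨b, hb, hmax⟩ := T.exists_max_image f hT
  have hend : ∀ c ∈ T, (∀ j ∈ T, f c ≤ f j) ∨ (∀ j ∈ T, f j ≤ f c) →
      #{j' ∈ T | f c = f j' + 1 ∨ f j' = f c + 1} ≤ 1 := by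
    refine fun c hc hext => card_le_one.2 fun x hx y hy => hf ?_
    simp only [mem_filter] at hx hy
    rcases hext with h | h <;> have := h x hx.1 <;> have := h y hy.1 <;> omega
  by_cases hab : a = b
  · subst hab
    have : #{j' ∈ T | f a = f j' + 1 ∨ f j' = f a + 1} = 0 := by
      refine card_eq_zero.2 (filter_eq_empty_iff.2 fun j hj => ?_)
      have := hmin j hj
      have := hmax j hj
      omega
    calc 2 = 2 - #{j' ∈ T | f a = f j' + 1 ∨ f j' = f a + 1} := by omega
      _ ≤ _ := single_le_sum (f := fun j => 2 - #{j' ∈ T | f j = f j' + 1 ∨ f j' = f j + 1})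
          (fun _ _ => Nat.zero_le _) ha
  · have ha1 := hend a ha (Or.inl hmin)
    have hb1 := hend b hb (Or.inr hmax)
    have := sum_le_sum_of_subset_of_nonneg
      (f := fun j => 2 - #{j' ∈ T | f j = f j' + 1 ∨ f j' = f j + 1})
      (insert_subset ha (singleton_subset_iff.2 hb)) (fun _ _ _ => Nat.zero_le _)
    rw [sum_pair hab] at this
    omega

theorem Set.ncard_eq_sum_indicator_one {α : Type*} [Fintype α] (s : Set α) :
    s.ncard = ∑ a, s.indicator 1 a := by
  classical
  simp [Set.indicator_apply, Set.ncard_eq_toFinset_card']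

namespace SimpleGraph

variable {V : Type*} (G : SimpleGraph V)

def kCore (k : ℕ) : Set V :=
  {v | ∃ s : Set V, v ∈ s ∧ ∀ w ∈ s, k ≤ (s ∩ G.neighborSet w).ncard}

noncomputable def coreDeficit (k : ℕ) (s : Set V) : V → ℕ :=
  s.indicator fun v => k - (s ∩ G.neighborSet v).ncard

variable {G}

theorem le_ncard_inter_kCore [Finite V] {k : ℕ} {w : V} (hw : w ∈ G.kCore k) :
    k ≤ (G.kCore k ∩ G.neighborSet w).ncard := by
  obtain ⟨s, hws, hs⟩ := hw
  exact (hs w hws).trans <| Set.ncard_le_ncard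
    (Set.inter_subset_inter_left _ fun u hu => ⟨s, hu, hs⟩) (Set.toFinite _)

theorem le_coreNumber_iff [Finite V] {k : ℕ} {v : V} :
    k ≤ coreNumber G v ↔ v ∈ G.kCore k := by
  have hbdd : BddAbove {k : ℕ | v ∈ G.kCore k} := by
    refine ⟨Nat.card V, ?_⟩
    rintro _ ⟨s, hv, hs⟩
    exact (hs v hv).trans (Set.ncard_le_card _)
  refine ⟨fun h => ?_, fun h => le_csSup hbdd h⟩
  have hne : {k : ℕ | v ∈ G.kCore k}.Nonempty := ⟨0, {v}, rfl, fun _ _ => Nat.zero_le _⟩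
  obtain ⟨s, hv, hs⟩ := Nat.sSup_mem hne hbdd
  exact ⟨s, hv, fun w hw => h.trans (hs w hw)⟩

theorem sum_deg_fromEdgeSet_le [Fintype V] (W : Finset (Sym2 V)) :
    ∑ v, deg (fromEdgeSet (W : Set (Sym2 V))) v ≤ 2 * #W := by
  classical
  have hdeg : ∀ v, deg (fromEdgeSet (W : Set (Sym2 V))) v =
      (fromEdgeSet (W : Set (Sym2 V))).degree v := fun v => by
    rw [deg, ← card_neighborSet_eq_degree, Set.ncard_eq_toFinset_card', Set.toFinset_card]
  simp only [hdeg, sum_degrees_eq_twice_card_edges]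
  gcongr
  intro e he
  simp only [mem_edgeFinset, edgeSet_fromEdgeSet] at he
  exact he.1

variable (G) in
theorem sum_coreDeficit_le [Fintype V] (W : Finset (Sym2 V)) {s : Set V} {k : ℕ}
    (hs : ∀ v ∈ s, k ≤ (s ∩ (G ⊔ fromEdgeSet (W : Set (Sym2 V))).neighborSet v).ncard) :
    ∑ v, G.coreDeficit k s v ≤ 2 * #W := by
  refine le_trans (sum_le_sum fun v _ => ?_) (sum_deg_fromEdgeSet_le W)
  by_cases hv : v ∈ s
  · rw [coreDeficit, Set.indicator_of_mem hv]
    have : (s ∩ (G ⊔ fromEdgeSet (W : Set (Sym2 V))).neighborSet v).ncard ≤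
        (s ∩ G.neighborSet v).ncard + deg (fromEdgeSet (W : Set (Sym2 V))) v :=
      (Set.ncard_le_ncard (fun _ hu => hu.2.imp (fun h => ⟨hu.1, h⟩) id)
        (Set.toFinite _)).trans (Set.ncard_union_le _ _)
    have := hs v hv
    omega
  · simp [coreDeficit, hv]

end SimpleGraph

open SimpleGraph

namespace SCV

variable {m n : ℕ}

def equivSum : (Fin m × Fin n ⊕ Fin m × Fin 5) ⊕ Fin n × Fin 5 ≃ SCV m n where
  toFun := Sum.elim (Sum.elim (fun p => X p.1 p.2) (fun p => W p.1 p.2)) (fun p => Z p.1 p.2)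
  invFun
    | X i j => .inl (.inl (i, j))
    | W i q => .inl (.inr (i, q))
    | Z j q => .inr (j, q)
  left_inv := by rintro ((_ | _) | _) <;> rfl
  right_inv := by rintro (_ | _ | _) <;> rfl

instance : Fintype (SCV m n) := Fintype.ofEquiv _ equivSum

section Decomposition

variable {M : Type*} [AddCommMonoid M]

def rowSum (f : SCV m n → M) (i : Fin m) : M := ∑ j, f (X i j) + ∑ q, f (W i q)

def colSum (f : SCV m n → M) (j : Fin n) : M := ∑ q, f (Z j q)

theorem sum_eq_sum_rowSum_add_sum_colSum (f : SCV m n → M) :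
    ∑ v, f v = ∑ i, rowSum f i + ∑ j, colSum f j := by
  rw [← equivSum.sum_comp]
  simp [equivSum, rowSum, colSum, Fintype.sum_prod_type, sum_add_distrib]

end Decomposition

variable {Su : Fin m → Finset (Fin n)} {C : Set (SCV m n)}

theorem ncard_inter_neighborSet_W_le_two {i : Fin m} (hrow : ∀ j, X i j ∉ C) :
    (C ∩ (scGraph Su).neighborSet (W i 0)).ncard ≤ 2 := by
  refine (Set.ncard_le_ncard (t := {W i 1, W i 4}) ?_).trans (Set.ncard_pair (by simp)).le
  rintro (⟨i', j⟩ | ⟨i', q⟩ | ⟨j, q⟩) ⟨hC, hadj⟩ <;> simp [scGraph, scRel] at hadj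
  · exact (hrow j (hadj.1 ▸ hC)).elim
  · obtain ⟨rfl, hq⟩ := hadj.2
    simp [Fin.ext_iff, hq]

theorem ncard_inter_neighborSet_Z_le_two {j : Fin n} (hcol : ∀ i, j ∈ Su i → X i j ∉ C) :
    (C ∩ (scGraph Su).neighborSet (Z j 0)).ncard ≤ 2 := by
  refine (Set.ncard_le_ncard (t := {Z j 1, Z j 4}) ?_).trans (Set.ncard_pair (by simp)).le
  rintro (⟨i, j'⟩ | ⟨i, q⟩ | ⟨j', q⟩) ⟨hC, hadj⟩ <;> simp [scGraph, scRel] at hadj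
  · obtain ⟨rfl, hj⟩ := hadj
    exact (hcol i hj hC).elim
  · obtain ⟨rfl, hq⟩ := hadj.2
    simp [Fin.ext_iff, hq]

/-- Row `i` of `X`-vertices is the path `X i 0, X i (n-1), X i (n-2), …, X i 1`;
`pathPos j` is the position of `X i j` on it. -/
def pathPos (j : Fin n) : ℕ := if (j : ℕ) = 0 then 0 else n - j

theorem pathPos_injective : Function.Injective (pathPos (n := n)) := by
  intro j j' h
  have := j.isLt
  have := j'.isLt
  unfold pathPos at h
  ext
  split_ifs at h <;> omega

theorem neighborSet_X_subset (i : Fin m) (j : Fin n) :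
    (scGraph Su).neighborSet (X i j) ⊆ insert (if j ∈ Su i then Z j 0 else W i 0)
      (X i '' {j' | pathPos j = pathPos j' + 1 ∨ pathPos j' = pathPos j + 1}) := by
  have := j.isLt
  rintro (⟨i', j'⟩ | ⟨i', q⟩ | ⟨j', q⟩) hadj <;> simp [scGraph, scRel] at hadj
  · obtain ⟨hne, ⟨rfl, h⟩ | ⟨rfl, h⟩⟩ := hadj <;>
    · have := j'.isLt
      have := Fin.val_injective.ne (hne rfl)
      refine Set.mem_insert_of_mem _ ⟨j', ?_, rfl⟩
      simp only [Set.mem_ofPred_eq, pathPos]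
      split_ifs <;> omega
  · obtain ⟨rfl, rfl, hj⟩ := hadj
    simp [hj]
  · obtain ⟨rfl, rfl, hj⟩ := hadj
    simp [hj]

theorem ncard_inter_neighborSet_X_le {i : Fin m} {T : Finset (Fin n)}
    (hT : ∀ j, X i j ∈ C → j ∈ T) (j : Fin n) :
    (C ∩ (scGraph Su).neighborSet (X i j)).ncard ≤
      #{j' ∈ T | pathPos j = pathPos j' + 1 ∨ pathPos j' = pathPos j + 1} + 1 := by
  calc (C ∩ (scGraph Su).neighborSet (X i j)).ncard
      ≤ (insert (if j ∈ Su i then Z j 0 else W i 0) (X i ''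
          ↑{j' ∈ T | pathPos j = pathPos j' + 1 ∨ pathPos j' = pathPos j + 1})).ncard := by
        refine Set.ncard_le_ncard (fun w ⟨hwC, hw⟩ => ?_) (Set.toFinite _)
        obtain rfl | ⟨j', hj', rfl⟩ := neighborSet_X_subset i j hw
        · exact Set.mem_insert _ _
        · exact Set.mem_insert_of_mem _ ⟨j', by simpa [hT j' hwC] using hj', rfl⟩
    _ ≤ _ := (Set.ncard_insert_le _ _).trans (by grw [Set.ncard_image_le, Set.ncard_coe_finset])

theorem two_le_rowSum_coreDeficit {i : Fin m} (hrow : ∃ j, X i j ∈ C) :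
    2 ≤ rowSum ((scGraph Su).coreDeficit 3 C) i := by
  classical
  set T : Finset (Fin n) := {j | X i j ∈ C} with hT
  have hTne : T.Nonempty := by
    obtain ⟨j, hj⟩ := hrow
    exact ⟨j, by simpa [hT]⟩
  calc 2 ≤ ∑ j ∈ T,
        (2 - #{j' ∈ T | pathPos j = pathPos j' + 1 ∨ pathPos j' = pathPos j + 1}) :=
        two_le_sum_two_sub_card_adjacent pathPos_injective hTne
    _ ≤ ∑ j ∈ T, (scGraph Su).coreDeficit 3 C (X i j) := by
        refine sum_le_sum fun j hj => ?_
        have hXj : X i j ∈ C := by simpa [hT] using hj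
        rw [coreDeficit, Set.indicator_of_mem hXj]
        have := ncard_inter_neighborSet_X_le (Su := Su) (T := T) (fun j' hj' => by simpa [hT]) j
        omega
    _ ≤ ∑ j, (scGraph Su).coreDeficit 3 C (X i j) := sum_le_sum_of_subset (subset_univ _)
    _ ≤ _ := Nat.le_add_right _ _

noncomputable def followerIndicator (C : Set (SCV m n)) : SCV m n → ℕ :=
  ({v | scFollower v} ∩ C).indicator 1

theorem followerIndicator_le_one (v : SCV m n) : followerIndicator C v ≤ 1 :=
  Set.indicator_le_self' (fun _ _ => zero_le_one) v

theorem followerIndicator_le_coreDeficit {v : SCV m n}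
    (hv : (C ∩ (scGraph Su).neighborSet v).ncard ≤ 2) :
    followerIndicator C v ≤ (scGraph Su).coreDeficit 3 C v := by
  by_cases h : v ∈ C
  · simp only [coreDeficit, Set.indicator_of_mem h]
    have := followerIndicator_le_one (C := C) v
    omega
  · simp [followerIndicator, h]

theorem rowSum_followerIndicator_le (i : Fin m) : rowSum (followerIndicator C) i ≤ n + 5 := by
  have hX := sum_le_card_nsmul univ (fun j => followerIndicator C (X i j)) 1
    fun _ _ => followerIndicator_le_one _
  have hW := sum_le_card_nsmul univ (fun q => followerIndicator C (W i q)) 1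
    fun _ _ => followerIndicator_le_one _
  simp only [card_univ, Fintype.card_fin, smul_eq_mul, mul_one] at hX hW
  exact add_le_add hX hW

theorem rowSum_followerIndicator_le_four_add {i : Fin m} (hrow : ∀ j, X i j ∉ C) :
    rowSum (followerIndicator C) i ≤ 4 + rowSum ((scGraph Su).coreDeficit 3 C) i := by
  have hX : ∑ j, followerIndicator C (X i j) = 0 :=
    sum_eq_zero fun j _ => by simp [followerIndicator, hrow j]
  have hW := sum_le_card_nsmul univ (fun q : Fin 4 => followerIndicator C (W i q.succ)) 1
    fun _ _ => followerIndicator_le_one _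
  have hW0 := followerIndicator_le_coreDeficit (ncard_inter_neighborSet_W_le_two (Su := Su) hrow)
  have hδ := single_le_sum (f := fun q => (scGraph Su).coreDeficit 3 C (W i q))
    (fun _ _ => Nat.zero_le _) (mem_univ 0)
  simp only [card_univ, Fintype.card_fin, smul_eq_mul, mul_one] at hW
  rw [rowSum, rowSum, hX, Fin.sum_univ_succ]
  omega

theorem colSum_followerIndicator_eq (j : Fin n) :
    colSum (followerIndicator C) j = followerIndicator C (Z j 0) := by
  simp [colSum, Fin.sum_univ_succ, followerIndicator, scFollower]

theorem colSum_followerIndicator_le {j : Fin n} (hcol : ∀ i, j ∈ Su i → X i j ∉ C) :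
    colSum (followerIndicator C) j ≤ colSum ((scGraph Su).coreDeficit 3 C) j := by
  rw [colSum_followerIndicator_eq]
  exact (followerIndicator_le_coreDeficit (ncard_inter_neighborSet_Z_le_two hcol)).trans
    (single_le_sum (f := fun q => (scGraph Su).coreDeficit 3 C (Z j q))
      (fun _ _ => Nat.zero_le _) (mem_univ 0))

open Classical in
noncomputable def rowsMeeting (C : Set (SCV m n)) : Finset (Fin m) := {i | ∃ j, X i j ∈ C}

open Classical in
noncomputable def uncovered (Su : Fin m → Finset (Fin n)) (C : Set (SCV m n)) : Finset (Fin n) :=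
  {j | ∀ i, j ∈ Su i → X i j ∉ C}

theorem mem_rowsMeeting {i : Fin m} : i ∈ rowsMeeting C ↔ ∃ j, X i j ∈ C := by
  simp [rowsMeeting]

theorem mem_uncovered {j : Fin n} : j ∈ uncovered Su C ↔ ∀ i, j ∈ Su i → X i j ∉ C := by
  simp [uncovered]

theorem two_mul_card_rowsMeeting_le :
    2 * #(rowsMeeting C) ≤ ∑ i, rowSum ((scGraph Su).coreDeficit 3 C) i :=
  calc 2 * #(rowsMeeting C) = ∑ _i ∈ rowsMeeting C, 2 := by
        rw [sum_const, smul_eq_mul, mul_comm]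
    _ ≤ ∑ i ∈ rowsMeeting C, rowSum ((scGraph Su).coreDeficit 3 C) i :=
      sum_le_sum fun _ hi => two_le_rowSum_coreDeficit (mem_rowsMeeting.1 hi)
    _ ≤ _ := sum_le_sum_of_subset (subset_univ _)

theorem sum_rowSum_followerIndicator_add_le :
    ∑ i, rowSum (followerIndicator C) i + 2 * #(rowsMeeting C) ≤
      4 * m + (n + 1) * #(rowsMeeting C) + ∑ i, rowSum ((scGraph Su).coreDeficit 3 C) i := by
  have hrow : ∀ i, rowSum (followerIndicator C) i + 2 * (if i ∈ rowsMeeting C then 1 else 0) ≤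
      4 + (n + 1) * (if i ∈ rowsMeeting C then 1 else 0) +
        rowSum ((scGraph Su).coreDeficit 3 C) i := by
    intro i
    split_ifs with hi
    · have := rowSum_followerIndicator_le (C := C) i
      have := two_le_rowSum_coreDeficit (Su := Su) (mem_rowsMeeting.1 hi)
      omega
    · simpa using rowSum_followerIndicator_le_four_add (Su := Su)
        (not_exists.1 (mt mem_rowsMeeting.2 hi))
  have := sum_le_sum fun i (_ : i ∈ univ) => hrow i
  simp only [sum_add_distrib, ← mul_sum, sum_boole, filter_univ_mem, Nat.cast_id, sum_const,
    card_univ, Fintype.card_fin, smul_eq_mul] at this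
  linarith

theorem sum_colSum_followerIndicator_add_le :
    ∑ j, colSum (followerIndicator C) j + #(uncovered Su C) ≤
      n + ∑ j, colSum ((scGraph Su).coreDeficit 3 C) j := by
  have hcol : ∀ j, colSum (followerIndicator C) j + (if j ∈ uncovered Su C then 1 else 0) ≤
      1 + colSum ((scGraph Su).coreDeficit 3 C) j := by
    intro j
    split_ifs with hj
    · have := colSum_followerIndicator_le (C := C) (mem_uncovered.1 hj)
      omega
    · have := followerIndicator_le_one (C := C) (Z j 0)
      rw [colSum_followerIndicator_eq]
      omega
  simpa [sum_add_distrib] using sum_le_sum fun j (_ : j ∈ univ) => hcol j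

theorem exists_cover_of_sum_coreDeficit_le {t : ℕ}
    (hD : ∑ v, (scGraph Su).coreDeficit 3 C v ≤ 2 * t)
    (hF : 4 * m + n * (t + 1) + t ≤ ∑ v, followerIndicator C v) :
    ∃ J : Finset (Fin m), #J ≤ t ∧ ∀ j, ∃ i ∈ J, j ∈ Su i := by
  rw [sum_eq_sum_rowSum_add_sum_colSum] at hD hF
  have hR := two_mul_card_rowsMeeting_le (Su := Su) (C := C)
  have hrows := sum_rowSum_followerIndicator_add_le (Su := Su) (C := C)
  have hcols := sum_colSum_followerIndicator_add_le (Su := Su) (C := C)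
  have hUn : #(uncovered Su C) ≤ n := card_le_univ _ |>.trans (by simp)
  have hRt : #(rowsMeeting C) ≤ t := by omega
  -- with `d = t - #(rowsMeeting C)` the bounds combine to `(n - 1) * d + #(uncovered Su C) ≤ 0`
  have hU : uncovered Su C = ∅ := by
    refine card_eq_zero.1 ?_
    rcases n with _ | n
    · omega
    · have := Nat.mul_le_mul_left n hRt
      nlinarith
  refine ⟨rowsMeeting C, hRt, fun j => ?_⟩
  obtain ⟨i, hi, hX⟩ : ∃ i, j ∈ Su i ∧ X i j ∈ C := by
    by_contra h
    have hj : j ∈ uncovered Su C := mem_uncovered.2 (by simpa using h)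
    simp [hU] at hj
  exact ⟨i, mem_rowsMeeting.2 ⟨j, hX⟩, hi⟩

end SCV

theorem stmt_12_general {m n : ℕ} (t : ℕ)
    (Su : Fin m → Finset (Fin n))
    (W : Finset (Sym2 (SCV m n))) (hWcard : W.card ≤ t)
    (hgood : 4 * m + n * (t + 1) + t ≤
      {v : SCV m n | scFollower v ∧
        3 ≤ coreNumber
          (scGraph Su ⊔ SimpleGraph.fromEdgeSet (↑W : Set (Sym2 (SCV m n)))) v}.ncard) :
    ∃ J : Finset (Fin m), J.card ≤ t ∧ ∀ j : Fin n, ∃ i ∈ J, j ∈ Su i := by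
  set H := scGraph Su ⊔ fromEdgeSet (↑W : Set (Sym2 (SCV m n)))
  have hcore : {v | scFollower v ∧ 3 ≤ coreNumber H v} = {v | scFollower v} ∩ H.kCore 3 := by
    ext v
    simp [le_coreNumber_iff]
  refine SCV.exists_cover_of_sum_coreDeficit_le (C := H.kCore 3) ?_ ?_
  · exact (sum_coreDeficit_le _ W fun v hv => le_ncard_inter_kCore hv).trans (by omega)
  · rwa [hcore, Set.ncard_eq_sum_indicator_one] at hgood

/-- Soundness direction of the NP-hardness reduction (Theorem 4): if adding at most `t`
non-edges between distinct followers makes at least `4m + n(t+1) + t` followers have core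
number at least 3, then some at most `t` of the sets `S_i` cover `U`. -/
theorem stmt_12 {m n : ℕ} (hn : 3 ≤ n) (hm : 1 ≤ m) (t : ℕ) (ht : 1 ≤ t)
    (Su : Fin m → Finset (Fin n))
    (W : Finset (Sym2 (SCV m n))) (hWcard : W.card ≤ t)
    (hdiag : ∀ e ∈ W, ¬ e.IsDiag)
    (hfol : ∀ e ∈ W, ∀ v ∈ e, scFollower v)
    (hnew : ∀ e ∈ W, e ∉ (scGraph Su).edgeSet)
    (hgood : 4 * m + n * (t + 1) + t ≤
      {v : SCV m n | scFollower v ∧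
        3 ≤ coreNumber
          (scGraph Su ⊔ SimpleGraph.fromEdgeSet (↑W : Set (Sym2 (SCV m n)))) v}.ncard) :
    ∃ J : Finset (Fin m), J.card ≤ t ∧ ∀ j : Fin n, ∃ i ∈ J, j ∈ Su i :=
  stmt_12_general t Su W hWcard hgood
end

section
/- Let h ≥ 2, p ≥ 2, m ≥ 0, and let g assign to each ℓ ∈ [m] and each i ∈ [h] an index g(ℓ,i) ∈ [p]. In the captain network G_M(h,p,m,g), the core number of every captain C_{i,j} is at least the core number of every leader l_{i'}. -/
/-- Vertices of the captain network with `h` leaders, `h` groups of `p` captains,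
and `m` remaining vertices. -/
inductive CNV (h p m : ℕ) where
  | L : Fin h → CNV h p m
  | C : Fin h → Fin p → CNV h p m
  | X : Fin m → CNV h p m

/-- Generating relation of the captain network `G_M(h,p,m,g)`: the leaders form a clique,
leader `l_i` is joined to all captains of its group `C_i`, the captains form a complete
`h`-partite graph (the groups being the parts), and `x_ℓ` is joined to the captain
`C_{i,g(ℓ,i)}` of each group `i`. -/
def cnRel {h p m : ℕ} (g : Fin m → Fin h → Fin p) : CNV h p m → CNV h p m → Prop
  | .L i, .L i' => i ≠ i'
  | .L i, .C i' _ => i = i'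
  | .C i _, .C i' _ => i ≠ i'
  | .X ℓ, .C i j => j = g ℓ i
  | _, _ => False

/-- The captain network `G_M(h,p,m,g)` for multiple leaders. -/
def captainNetwork {h p m : ℕ} (g : Fin m → Fin h → Fin p) : SimpleGraph (CNV h p m) :=
  SimpleGraph.fromRel (cnRel g)

/-! A leader has degree `h - 1 + p`, which bounds its core number. Removing the vertices `x_ℓ`
leaves a subgraph in which every leader keeps degree `h - 1 + p` and every captain has degree
`1 + (h - 1) p ≥ h - 1 + p`, so each captain lies in an `(h - 1 + p)`-core. -/

lemma coreNumber_le_ncard_neighborSet {V : Type*} [Finite V] (G : SimpleGraph V) (v : V) :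
    coreNumber G v ≤ (G.neighborSet v).ncard := by
  refine csSup_le ⟨0, {v}, rfl, fun _ _ => Nat.zero_le _⟩ ?_
  rintro k ⟨s, hv, hs⟩
  exact (hs v hv).trans (Set.ncard_le_ncard Set.inter_subset_right)

lemma le_coreNumber {V : Type*} [Finite V] {G : SimpleGraph V} {v : V} {k : ℕ} (s : Set V)
    (hv : v ∈ s) (hs : ∀ w ∈ s, k ≤ (s ∩ G.neighborSet w).ncard) : k ≤ coreNumber G v := by
  refine le_csSup ⟨Nat.card V, ?_⟩ ⟨s, hv, hs⟩
  rintro n ⟨t, hvt, ht⟩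
  exact (ht v hvt).trans (Set.ncard_le_card _)

namespace CNV

variable {h p m : ℕ}

instance : Finite (CNV h p m) :=
  Finite.of_surjective (fun v : Fin h ⊕ Fin h × Fin p ⊕ Fin m =>
    v.elim L fun v => v.elim (fun q => C q.1 q.2) X) <| by
      rintro (i | ⟨i, j⟩ | ℓ)
      exacts [⟨.inl i, rfl⟩, ⟨.inr (.inl (i, j)), rfl⟩, ⟨.inr (.inr ℓ), rfl⟩]

lemma L_injective : Function.Injective (L : Fin h → CNV h p m) := fun _ _ => L.inj

lemma C_injective (i : Fin h) : Function.Injective (C i : Fin p → CNV h p m) :=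
  fun _ _ hq => (C.inj hq).2

lemma C_uncurry_injective :
    Function.Injective (fun q : Fin h × Fin p => (C q.1 q.2 : CNV h p m)) :=
  fun _ _ hq => Prod.ext (C.inj hq).1 (C.inj hq).2

end CNV

open CNV

section

variable {h p m : ℕ} (g : Fin m → Fin h → Fin p)

lemma captainNetwork_neighborSet_L (i : Fin h) :
    (captainNetwork g).neighborSet (L i) = L '' {i}ᶜ ∪ Set.range (C i) := by
  ext v; cases v <;> simp [captainNetwork, cnRel, eq_comm]

lemma ncard_captainNetwork_neighborSet_L (i : Fin h) :
    ((captainNetwork g).neighborSet (L i)).ncard = h - 1 + p := by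
  rw [captainNetwork_neighborSet_L, Set.ncard_union_eq (by simp [Set.disjoint_left]),
    Set.ncard_image_of_injective _ L_injective, Set.ncard_compl,
    ← Set.image_univ, Set.ncard_image_of_injective _ (C_injective i)]
  simp

lemma compl_range_X_inter_captainNetwork_neighborSet_C (i : Fin h) (j : Fin p) :
    (Set.range X)ᶜ ∩ (captainNetwork g).neighborSet (C i j) =
      {L i} ∪ (fun q : Fin h × Fin p => C q.1 q.2) '' ({i}ᶜ ×ˢ Set.univ) := by
  ext v; cases v <;> simp +contextual [captainNetwork, cnRel, eq_comm]

lemma ncard_compl_range_X_inter_captainNetwork_neighborSet_C (i : Fin h) (j : Fin p) :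
    ((Set.range X)ᶜ ∩ (captainNetwork g).neighborSet (C i j)).ncard = 1 + (h - 1) * p := by
  rw [compl_range_X_inter_captainNetwork_neighborSet_C, Set.ncard_union_eq (by simp),
    Set.ncard_image_of_injective _ C_uncurry_injective, Set.ncard_prod, Set.ncard_compl]
  simp

lemma coreNumber_captainNetwork_L_le (i : Fin h) :
    coreNumber (captainNetwork g) (L i) ≤ h - 1 + p :=
  (coreNumber_le_ncard_neighborSet _ _).trans (ncard_captainNetwork_neighborSet_L g i).le

lemma le_coreNumber_captainNetwork_C (hh : 2 ≤ h) (i : Fin h) (j : Fin p) :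
    h - 1 + p ≤ coreNumber (captainNetwork g) (C i j) := by
  refine le_coreNumber (Set.range X)ᶜ (by simp) ?_
  rintro (t | ⟨t, s⟩ | ℓ) hw
  · rw [Set.inter_eq_right.2, ncard_captainNetwork_neighborSet_L]
    rw [captainNetwork_neighborSet_L]
    rintro _ (⟨_, _, rfl⟩ | ⟨_, rfl⟩) <;> simp
  · rw [ncard_compl_range_X_inter_captainNetwork_neighborSet_C]
    obtain ⟨a, rfl⟩ : ∃ a, h = a + 2 := ⟨h - 2, by omega⟩
    obtain ⟨b, rfl⟩ : ∃ b, p = b + 1 := ⟨p - 1, by have := s.pos; omega⟩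
    show a + 1 + (b + 1) ≤ 1 + (a + 1) * (b + 1)
    nlinarith
  · exact absurd ⟨ℓ, rfl⟩ hw

end

theorem stmt_14_general {h p m : ℕ} (hh : 2 ≤ h)
    (g : Fin m → Fin h → Fin p) :
    ∀ (i i' : Fin h) (j : Fin p),
      coreNumber (captainNetwork g) (CNV.L i') ≤
      coreNumber (captainNetwork g) (CNV.C i j) :=
  fun i i' j =>
    (coreNumber_captainNetwork_L_le g i').trans (le_coreNumber_captainNetwork_C g hh i j)

/-- In the captain network with `h ≥ 2` leaders and `p ≥ 2` captains per group, the core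
number of every captain is at least the core number of every leader. -/
theorem stmt_14 {h p m : ℕ} (hh : 2 ≤ h) (hp : 2 ≤ p)
    (g : Fin m → Fin h → Fin p) :
    ∀ (i i' : Fin h) (j : Fin p),
      coreNumber (captainNetwork g) (CNV.L i') ≤
      coreNumber (captainNetwork g) (CNV.C i j) :=
  stmt_14_general hh g
end

section
/- Let h ≥ 2, p ≥ 2, m ≥ 0, and let g assign to each ℓ ∈ [m] and each i ∈ [h] an index g(ℓ,i) ∈ [p]. In the captain network G_M(h,p,m,g): every leader l_i and every captain C_{i,j} has core number at least h + p − 1, and every vertex x_ℓ (ℓ ∈ [m]) has core number exactly h. -/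
deriving instance DecidableEq, Fintype for CNV

lemma adj_LL {h p m : ℕ} (g : Fin m → Fin h → Fin p) {i i' : Fin h} (hne : i ≠ i') :
    (captainNetwork g).Adj (CNV.L i) (CNV.L i') := by
  rw [captainNetwork, SimpleGraph.fromRel_adj]
  exact ⟨by simp [hne], Or.inl hne⟩

lemma adj_LC {h p m : ℕ} (g : Fin m → Fin h → Fin p) (i : Fin h) (j : Fin p) :
    (captainNetwork g).Adj (CNV.L i) (CNV.C i j) := by
  rw [captainNetwork, SimpleGraph.fromRel_adj]
  exact ⟨by simp, Or.inl rfl⟩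

lemma adj_CC {h p m : ℕ} (g : Fin m → Fin h → Fin p) {i i' : Fin h} (j j' : Fin p)
    (hne : i ≠ i') : (captainNetwork g).Adj (CNV.C i j) (CNV.C i' j') := by
  rw [captainNetwork, SimpleGraph.fromRel_adj]
  exact ⟨by simp [hne], Or.inl hne⟩

lemma adj_XC {h p m : ℕ} (g : Fin m → Fin h → Fin p) (ℓ : Fin m) (i : Fin h) :
    (captainNetwork g).Adj (CNV.X ℓ) (CNV.C i (g ℓ i)) := by
  rw [captainNetwork, SimpleGraph.fromRel_adj]
  exact ⟨by simp, Or.inl rfl⟩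

lemma L_inj {h p m : ℕ} : Function.Injective (CNV.L : Fin h → CNV h p m) :=
  fun a b hab => by cases hab; rfl

lemma Ci_inj {h p m : ℕ} (i : Fin h) :
    Function.Injective (CNV.C i : Fin p → CNV h p m) :=
  fun a b hab => by cases hab; rfl

lemma Cpair_inj {h p m : ℕ} :
    Function.Injective (fun q : Fin h × Fin p => (CNV.C q.1 q.2 : CNV h p m)) := by
  rintro ⟨a, b⟩ ⟨c, d⟩ hq
  simp only [CNV.C.injEq] at hq
  exact Prod.ext hq.1 hq.2

lemma Cg_inj {h p m : ℕ} (f : Fin h → Fin p) :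
    Function.Injective (fun i => (CNV.C i (f i) : CNV h p m)) := by
  intro a b hab
  simp only [CNV.C.injEq] at hab
  exact hab.1

lemma core_ge {V : Type*} [Finite V] (G : SimpleGraph V) (v : V) (k : ℕ)
    (s : Set V) (hv : v ∈ s) (hmin : ∀ w ∈ s, k ≤ (s ∩ G.neighborSet w).ncard) :
    k ≤ coreNumber G v := by
  apply le_csSup
  · refine ⟨Nat.card V, ?_⟩
    rintro n ⟨t, hvt, ht⟩
    calc n ≤ (t ∩ G.neighborSet v).ncard := ht v hvt
    _ ≤ (Set.univ : Set V).ncard := Set.ncard_le_ncard (Set.subset_univ _) Set.finite_univ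
    _ = Nat.card V := Set.ncard_univ V
  · exact ⟨s, hv, hmin⟩

lemma core_le {V : Type*} (G : SimpleGraph V) (v : V) (n : ℕ)
    (hub : ∀ k, (∃ s : Set V, v ∈ s ∧ ∀ w ∈ s, k ≤ (s ∩ G.neighborSet w).ncard) → k ≤ n) :
    coreNumber G v ≤ n :=
  csSup_le ⟨0, {v}, rfl, fun _ _ => Nat.zero_le _⟩ (fun k hk => hub k hk)

lemma finset_le_ncard {V : Type*} (T : Finset V) (s : Set V) (hsub : ↑T ⊆ s)
    (hs : s.Finite) : T.card ≤ s.ncard := by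
  rw [← Set.ncard_coe_finset]; exact Set.ncard_le_ncard hsub hs

lemma s1_deg {h p m : ℕ} (hh : 2 ≤ h) (hp : 2 ≤ p) (g : Fin m → Fin h → Fin p) :
    ∀ w ∈ {v : CNV h p m | ∀ ℓ, v ≠ CNV.X ℓ},
      h + p - 1 ≤ (({v : CNV h p m | ∀ ℓ, v ≠ CNV.X ℓ}) ∩
        (captainNetwork g).neighborSet w).ncard := by
  intro w hw
  cases w with
  | X ℓ => exact absurd rfl (hw ℓ)
  | L i =>
    have hsub : ↑(((Finset.univ.erase i).image CNV.L) ∪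
        (Finset.univ.image (CNV.C i)) : Finset (CNV h p m)) ⊆
        ({v : CNV h p m | ∀ ℓ, v ≠ CNV.X ℓ}) ∩
          (captainNetwork g).neighborSet (CNV.L i) := by
      intro v hv
      simp only [Finset.coe_union, Set.mem_union, Finset.coe_image, Set.mem_image,
        Finset.mem_coe, Finset.mem_erase, Finset.mem_univ, and_true] at hv
      rcases hv with ⟨a, ha, rfl⟩ | ⟨b, _, rfl⟩
      · exact ⟨fun ℓ => by simp, adj_LL g (Ne.symm ha)⟩
      · exact ⟨fun ℓ => by simp, adj_LC g i b⟩
    have hcard : (((Finset.univ.erase i).image CNV.L) ∪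
        (Finset.univ.image (CNV.C i)) : Finset (CNV h p m)).card = (h - 1) + p := by
      rw [Finset.card_union_of_disjoint (by simp [Finset.disjoint_left]),
        Finset.card_image_of_injective _ L_inj,
        Finset.card_image_of_injective _ (Ci_inj i),
        Finset.card_erase_of_mem (Finset.mem_univ i), Finset.card_univ,
        Finset.card_univ, Fintype.card_fin, Fintype.card_fin]
    have := finset_le_ncard _ _ hsub (Set.toFinite _)
    rw [hcard] at this
    omega
  | C i j =>
    have hsub : ↑(insert (CNV.L i)
        (((Finset.univ.erase i) ×ˢ (Finset.univ : Finset (Fin p))).image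
          fun q => CNV.C q.1 q.2) : Finset (CNV h p m)) ⊆
        ({v : CNV h p m | ∀ ℓ, v ≠ CNV.X ℓ}) ∩
          (captainNetwork g).neighborSet (CNV.C i j) := by
      intro v hv
      simp only [Finset.coe_insert, Set.mem_insert_iff, Finset.coe_image, Set.mem_image,
        Finset.mem_coe, Finset.mem_product, Finset.mem_erase, Finset.mem_univ,
        and_true] at hv
      rcases hv with rfl | ⟨⟨a, b⟩, ha, rfl⟩
      · exact ⟨fun ℓ => by simp, (adj_LC g i j).symm⟩
      · exact ⟨fun ℓ => by simp, (adj_CC g b j (ha : a ≠ i)).symm⟩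
    have hcard : (insert (CNV.L i)
        (((Finset.univ.erase i) ×ˢ (Finset.univ : Finset (Fin p))).image
          fun q => CNV.C q.1 q.2) : Finset (CNV h p m)).card = 1 + (h - 1) * p := by
      rw [Finset.card_insert_of_notMem (by simp),
        Finset.card_image_of_injective _ Cpair_inj,
        Finset.card_product, Finset.card_erase_of_mem (Finset.mem_univ i),
        Finset.card_univ, Finset.card_univ, Fintype.card_fin, Fintype.card_fin]
      omega
    have := finset_le_ncard _ _ hsub (Set.toFinite _)
    rw [hcard] at this
    have e1 : (h - 1) * p = (h - 1) * (p - 1) + (h - 1) := by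
      have hp1 : p - 1 + 1 = p := by omega
      calc (h - 1) * p = (h - 1) * ((p - 1) + 1) := by rw [hp1]
      _ = (h - 1) * (p - 1) + (h - 1) := by ring
    have e2 : p - 1 ≤ (h - 1) * (p - 1) := Nat.le_mul_of_pos_left _ (by omega)
    rw [e1] at this
    omega


/-- In the captain network with `h ≥ 2` leaders and `p ≥ 2` captains per group: every
leader and every captain has core number at least `h + p − 1`, and every vertex `x_ℓ`
has core number exactly `h`. -/
theorem stmt_15 {h p m : ℕ} (hh : 2 ≤ h) (hp : 2 ≤ p)
    (g : Fin m → Fin h → Fin p) :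
    (∀ i : Fin h, h + p - 1 ≤ coreNumber (captainNetwork g) (CNV.L i)) ∧
    (∀ (i : Fin h) (j : Fin p),
      h + p - 1 ≤ coreNumber (captainNetwork g) (CNV.C i j)) ∧
    (∀ ℓ : Fin m, coreNumber (captainNetwork g) (CNV.X ℓ) = h) := by
  refine ⟨fun i => core_ge _ _ _ {v : CNV h p m | ∀ ℓ, v ≠ CNV.X ℓ}
      (fun ℓ => by simp) (s1_deg hh hp g),
    fun i j => core_ge _ _ _ {v : CNV h p m | ∀ ℓ, v ≠ CNV.X ℓ}
      (fun ℓ => by simp) (s1_deg hh hp g),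
    fun ℓ => le_antisymm ?_ ?_⟩
  · -- upper bound : coreNumber (X ℓ) ≤ h
    apply core_le
    rintro k ⟨s, hvs, hs⟩
    have hN : (captainNetwork g).neighborSet (CNV.X ℓ) ⊆
        (fun i => CNV.C i (g ℓ i)) '' Set.univ := by
      intro b hb
      cases b with
      | L i => simp [captainNetwork, SimpleGraph.fromRel_adj, cnRel,
          SimpleGraph.mem_neighborSet] at hb
      | X ℓ' => simp [captainNetwork, SimpleGraph.fromRel_adj, cnRel,
          SimpleGraph.mem_neighborSet] at hb
      | C i j =>
        simp only [SimpleGraph.mem_neighborSet, captainNetwork, SimpleGraph.fromRel_adj,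
          cnRel, or_false] at hb
        exact ⟨i, Set.mem_univ i, by rw [hb.2]⟩
    calc k ≤ (s ∩ (captainNetwork g).neighborSet (CNV.X ℓ)).ncard := hs _ hvs
    _ ≤ ((fun i => CNV.C i (g ℓ i)) '' Set.univ).ncard :=
        Set.ncard_le_ncard (Set.inter_subset_right.trans hN) (Set.toFinite _)
    _ ≤ (Set.univ : Set (Fin h)).ncard := Set.ncard_image_le Set.finite_univ
    _ = h := by rw [Set.ncard_univ, Nat.card_eq_fintype_card, Fintype.card_fin]
  · -- lower bound : h ≤ coreNumber (X ℓ)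
    apply core_ge _ _ _
      (insert (CNV.X ℓ) (Set.range fun i => CNV.C i (g ℓ i))) (Set.mem_insert _ _)
    intro w hw
    rcases hw with rfl | ⟨i, rfl⟩
    · -- w = X ℓ
      have hsub : ↑(Finset.univ.image fun i => CNV.C i (g ℓ i) : Finset (CNV h p m)) ⊆
          (insert (CNV.X ℓ) (Set.range fun i => CNV.C i (g ℓ i))) ∩
            (captainNetwork g).neighborSet (CNV.X ℓ) := by
        intro v hv
        simp only [Finset.coe_image, Finset.coe_univ, Set.image_univ,
          Set.mem_range] at hv
        obtain ⟨a, rfl⟩ := hv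
        exact ⟨Set.mem_insert_of_mem _ ⟨a, rfl⟩, adj_XC g ℓ a⟩
      have hcard : (Finset.univ.image fun i => CNV.C i (g ℓ i) :
          Finset (CNV h p m)).card = h := by
        rw [Finset.card_image_of_injective _ (Cg_inj (g ℓ)),
          Finset.card_univ, Fintype.card_fin]
      have := finset_le_ncard _ _ hsub (Set.toFinite _)
      omega
    · -- w = C i (g ℓ i)
      show h ≤ ((insert (CNV.X ℓ) (Set.range fun i => CNV.C i (g ℓ i))) ∩
        (captainNetwork g).neighborSet (CNV.C i (g ℓ i))).ncard
      have hsub : ↑(insert (CNV.X ℓ)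
          ((Finset.univ.erase i).image fun i' => CNV.C i' (g ℓ i')) :
            Finset (CNV h p m)) ⊆
          (insert (CNV.X ℓ) (Set.range fun i => CNV.C i (g ℓ i))) ∩
            (captainNetwork g).neighborSet (CNV.C i (g ℓ i)) := by
        intro v hv
        simp only [Finset.coe_insert, Set.mem_insert_iff, Finset.coe_image,
          Set.mem_image, Finset.mem_coe, Finset.mem_erase, Finset.mem_univ,
          and_true] at hv
        rcases hv with rfl | ⟨a, ha, rfl⟩
        · exact ⟨Set.mem_insert _ _, (adj_XC g ℓ i).symm⟩
        · exact ⟨Set.mem_insert_of_mem _ ⟨a, rfl⟩,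
            adj_CC g (g ℓ i) (g ℓ a) (Ne.symm ha)⟩
      have hcard : (insert (CNV.X ℓ)
          ((Finset.univ.erase i).image fun i' => CNV.C i' (g ℓ i')) :
            Finset (CNV h p m)).card = 1 + (h - 1) := by
        rw [Finset.card_insert_of_notMem (by simp),
          Finset.card_image_of_injective _ (Cg_inj (g ℓ)),
          Finset.card_erase_of_mem (Finset.mem_univ i), Finset.card_univ,
          Fintype.card_fin]
        omega
      have := finset_le_ncard _ _ hsub (Set.toFinite _)
      omega
end
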